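/- arXiv:1201.6635 — 9 statements merged into one kernel-verified Lean document; each statement's English description precedes it below -/
import Mathlib

section
/- Let B = (b_{ij}) be a real symmetric n×n matrix with b_{ii} ≥ Σ_{j≠i} |b_{ij}| for all i, and suppose the graph on vertices {1,…,n} with an edge between i and j whenever b_{ij} ≠ 0 (i ≠ j) is connected. Then the kernel of B has dimension at most 1. -/
open Matrix Finset

lemma key_step {n : ℕ} (B : Matrix (Fin n) (Fin n) ℝ)
    (hdom : ∀ i, ∑ j ∈ Finset.univ.erase i, |B i j| ≤ B i i)
    (x : Fin n → ℝ) (hx : B.mulVec x = 0)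
    (i : Fin n) (hmax : ∀ k, |x k| ≤ |x i|)
    (j : Fin n) (hj : j ≠ i) (hBij : B i j ≠ 0) : |x j| = |x i| := by
  have h0 : ∑ k, B i k * x k = 0 := by
    have := congrFun hx i
    simpa [Matrix.mulVec, dotProduct] using this
  have hBii : 0 ≤ B i i :=
    le_trans (Finset.sum_nonneg fun _ _ => abs_nonneg _) (hdom i)
  have hsplit : B i i * x i + ∑ k ∈ Finset.univ.erase i, B i k * x k = 0 := by
    have := Finset.add_sum_erase Finset.univ (fun k => B i k * x k) (Finset.mem_univ i)
    rw [this]; exact h0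
  have hneg : B i i * x i = -∑ k ∈ Finset.univ.erase i, B i k * x k :=
    eq_neg_of_add_eq_zero_left hsplit
  have h1 : B i i * |x i| ≤ ∑ k ∈ Finset.univ.erase i, |B i k| * |x k| := by
    calc B i i * |x i| = |B i i * x i| := by rw [abs_mul, abs_of_nonneg hBii]
      _ = |∑ k ∈ Finset.univ.erase i, B i k * x k| := by rw [hneg, abs_neg]
      _ ≤ ∑ k ∈ Finset.univ.erase i, |B i k * x k| := Finset.abs_sum_le_sum_abs _ _
      _ = ∑ k ∈ Finset.univ.erase i, |B i k| * |x k| := by simp [abs_mul]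
  have h2 : ∀ k ∈ Finset.univ.erase i, |B i k| * |x k| ≤ |B i k| * |x i| :=
    fun k _ => mul_le_mul_of_nonneg_left (hmax k) (abs_nonneg _)
  have h3 : ∑ k ∈ Finset.univ.erase i, |B i k| * |x i| ≤ B i i * |x i| := by
    rw [← Finset.sum_mul]
    exact mul_le_mul_of_nonneg_right (hdom i) (abs_nonneg _)
  have heq : ∑ k ∈ Finset.univ.erase i, |B i k| * |x k|
      = ∑ k ∈ Finset.univ.erase i, |B i k| * |x i| :=
    le_antisymm (Finset.sum_le_sum h2) (h3.trans h1)
  have := (Finset.sum_eq_sum_iff_of_le h2).mp heq j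
    (Finset.mem_erase.mpr ⟨hj, Finset.mem_univ j⟩)
  exact mul_left_cancel₀ (abs_ne_zero.mpr hBij) this

/-- a real symmetric diagonally dominant matrix whose off-diagonal
nonzero-pattern graph is connected has kernel of dimension at most 1. -/
theorem stmt_2 {n : ℕ} (B : Matrix (Fin n) (Fin n) ℝ)
    (hsymm : B.IsSymm)
    (hdom : ∀ i, ∑ j ∈ Finset.univ.erase i, |B i j| ≤ B i i)
    (hconn : (SimpleGraph.fromRel fun i j => B i j ≠ 0).Connected) :
    Module.finrank ℝ (LinearMap.ker B.mulVecLin) ≤ 1 := by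
  set G := SimpleGraph.fromRel fun i j => B i j ≠ 0 with hG
  have hne : Nonempty (Fin n) := hconn.nonempty
  let v₀ : Fin n := Classical.arbitrary (Fin n)
  have hinj : Function.Injective
      ((LinearMap.proj v₀ : (Fin n → ℝ) →ₗ[ℝ] ℝ).comp
        (LinearMap.ker B.mulVecLin).subtype) := by
    rw [← LinearMap.ker_eq_bot, LinearMap.ker_eq_bot']
    rintro ⟨x, hxmem⟩ hx0
    have hx : B.mulVec x = 0 := by
      have := LinearMap.mem_ker.mp hxmem
      simpa [Matrix.mulVecLin] using this
    have hxv : x v₀ = 0 := by simpa using hx0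
    obtain ⟨i, -, hmax⟩ := Finset.exists_max_image Finset.univ (fun k => |x k|)
      ⟨v₀, Finset.mem_univ v₀⟩
    have hmax' : ∀ k, |x k| ≤ |x i| := fun k => hmax k (Finset.mem_univ k)
    -- propagate along the graph: every vertex has |x ·| = |x i|
    have step : ∀ a b, G.Adj a b → |x a| = |x i| → |x b| = |x i| := by
      intro a b hab ha
      have hamax : ∀ k, |x k| ≤ |x a| := fun k => ha ▸ hmax' k
      have hne' : a ≠ b := hab.ne
      have hB : B a b ≠ 0 := by
        rw [hG, SimpleGraph.fromRel_adj] at hab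
        rcases hab.2 with h | h
        · exact h
        · intro hz
          apply h
          have : B b a = B a b := hsymm.apply a b
          rw [this, hz]
      rw [← ha]
      exact key_step B hdom x hx a hamax b (Ne.symm hne') hB
    have reach : ∀ a b, G.Reachable a b → |x a| = |x i| → |x b| = |x i| := by
      intro a b hr
      obtain ⟨w⟩ := hr
      induction w with
      | nil => exact id
      | cons h p ih => intro ha; exact ih (step _ _ h ha)
    have hall : ∀ j, |x j| = |x i| := fun j => reach i j (hconn i j) rfl
    have hxi : |x i| = 0 := by rw [← hall v₀, hxv, abs_zero]
    have : x = 0 := by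
      funext k
      have := hall k
      rw [hxi] at this
      exact abs_eq_zero.mp this
    exact Subtype.ext this
  calc Module.finrank ℝ (LinearMap.ker B.mulVecLin)
      ≤ Module.finrank ℝ ℝ := LinearMap.finrank_le_finrank_of_injective hinj
    _ = 1 := Module.finrank_self ℝ
end

section
/- Let B = (b_{ij}) be a real symmetric n×n diagonally dominant matrix (b_{ii} ≥ Σ_{j≠i}|b_{ij}|) whose off-diagonal nonzero-pattern graph is connected. Then ker B ≠ 0 if and only if b_{ii} = Σ_{j≠i}|b_{ij}| for all i and there exist signs λ_i ∈ {1,-1} with sign(b_{ij}) = −λ_i λ_j for all i ≠ j with b_{ij} ≠ 0; in that case ker B is spanned by (λ₁,…,λ_n)ᵀ. -/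
open Matrix Finset

private lemma sgn_mul_abs (t : ℝ) : Real.sign t * |t| = t := by
  rcases lt_trichotomy t 0 with h | h | h
  · rw [Real.sign_of_neg h, abs_of_neg h]; ring
  · simp [h]
  · rw [Real.sign_of_pos h, abs_of_pos h]; ring

private lemma sgn_mul_self (t : ℝ) : Real.sign t * t = |t| := by
  rcases lt_trichotomy t 0 with h | h | h
  · rw [Real.sign_of_neg h, abs_of_neg h]; ring
  · simp [h]
  · rw [Real.sign_of_pos h, abs_of_pos h]; ring

private lemma sgn_sq {t : ℝ} (h : t ≠ 0) : Real.sign t * Real.sign t = 1 := by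
  rcases Real.sign_apply_eq_of_ne_zero t h with hs | hs <;> rw [hs] <;> norm_num

private lemma walk_prop {V : Type*} {G : SimpleGraph V} (Q : V → Prop)
    (hstep : ∀ a b, G.Adj a b → Q a → Q b) :
    ∀ {a b : V}, G.Walk a b → Q a → Q b := by
  intro a b w
  induction w with
  | nil => exact id
  | cons h _ ih => exact fun qa => ih (hstep _ _ h qa)

/-- Key single-row analysis at a coordinate of maximal absolute value. -/
private lemma key {n : ℕ} (B : Matrix (Fin n) (Fin n) ℝ)
    (hdom : ∀ i, ∑ j ∈ Finset.univ.erase i, |B i j| ≤ B i i)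
    (x : Fin n → ℝ) (hx : B.mulVec x = 0) (i : Fin n)
    (hmax : ∀ j, |x j| ≤ |x i|) (hpos : 0 < |x i|) :
    B i i = ∑ j ∈ Finset.univ.erase i, |B i j| ∧
      ∀ j, j ≠ i → B i j ≠ 0 → x j = -Real.sign (B i j) * x i := by
  set M : ℝ := |x i| with hM
  set S : ℝ := ∑ j ∈ Finset.univ.erase i, |B i j| with hS
  have hrow : ∑ j ∈ Finset.univ.erase i, B i j * x j + B i i * x i = 0 := by
    have h0 := congrFun hx i
    have h1 : ∑ j, B i j * x j = 0 := by
      simpa [Matrix.mulVec, dotProduct] using h0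
    rw [← Finset.sum_erase_add Finset.univ _ (Finset.mem_univ i)] at h1
    exact h1
  have hBii_nonneg : 0 ≤ B i i :=
    le_trans (Finset.sum_nonneg fun j _ => abs_nonneg _) (hdom i)
  -- chain of inequalities
  have hab : B i i * M ≤ ∑ j ∈ Finset.univ.erase i, |B i j * x j| := by
    have h1 : B i i * M = |B i i * x i| := by
      rw [abs_mul, abs_of_nonneg hBii_nonneg]
    have h2 : |B i i * x i| = |∑ j ∈ Finset.univ.erase i, B i j * x j| := by
      have : B i i * x i = -∑ j ∈ Finset.univ.erase i, B i j * x j := by linarith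
      rw [this, abs_neg]
    rw [h1, h2]
    exact Finset.abs_sum_le_sum_abs _ _
  have hbc : ∑ j ∈ Finset.univ.erase i, |B i j * x j| ≤ S * M := by
    rw [hS, Finset.sum_mul]
    refine Finset.sum_le_sum fun j _ => ?_
    rw [abs_mul]
    exact mul_le_mul_of_nonneg_left (hmax j) (abs_nonneg _)
  have hca : S * M ≤ B i i * M := mul_le_mul_of_nonneg_right (hdom i) (le_of_lt hpos)
  have hac : B i i * M = S * M := le_antisymm (le_trans hab hbc) hca
  have heq : B i i = S := mul_right_cancel₀ (ne_of_gt hpos) hac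
  refine ⟨heq, ?_⟩
  -- sum of nonneg terms equal to zero
  have hsum0 : ∑ j ∈ Finset.univ.erase i,
      (|B i j| * M + Real.sign (x i) * (B i j * x j)) = 0 := by
    rw [Finset.sum_add_distrib, ← Finset.sum_mul, ← Finset.mul_sum, ← hS]
    have h1 : ∑ j ∈ Finset.univ.erase i, B i j * x j = -(B i i * x i) := by linarith
    rw [h1]
    have h2 : Real.sign (x i) * x i = M := sgn_mul_self (x i)
    have : Real.sign (x i) * -(B i i * x i) = -(B i i * (Real.sign (x i) * x i)) := by ring
    rw [this, h2, heq]
    ring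
  have hnonneg : ∀ j ∈ Finset.univ.erase i,
      0 ≤ |B i j| * M + Real.sign (x i) * (B i j * x j) := by
    intro j _
    have h1 : -(|B i j| * M) ≤ Real.sign (x i) * (B i j * x j) := by
      have h2 : |Real.sign (x i) * (B i j * x j)| ≤ |B i j| * M := by
        rw [abs_mul, abs_mul]
        have habs : |Real.sign (x i)| ≤ 1 := by
          rcases Real.sign_apply_eq (x i) with hs | hs | hs <;> rw [hs] <;> norm_num
        calc |Real.sign (x i)| * (|B i j| * |x j|) ≤ 1 * (|B i j| * |x j|) :=
              mul_le_mul_of_nonneg_right habs (by positivity)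
          _ = |B i j| * |x j| := one_mul _
          _ ≤ |B i j| * M := mul_le_mul_of_nonneg_left (hmax j) (abs_nonneg _)
      linarith [neg_abs_le (Real.sign (x i) * (B i j * x j)), h2]
    linarith
  have hzero := (Finset.sum_eq_zero_iff_of_nonneg hnonneg).mp hsum0
  intro j hj hBij
  have hterm := hzero j (Finset.mem_erase.mpr ⟨hj, Finset.mem_univ j⟩)
  -- derive B i j * x j = -|B i j| * x i
  have hxine : x i ≠ 0 := fun h => by simp [hM, h] at hpos
  have hs2 : Real.sign (x i) * Real.sign (x i) = 1 := sgn_sq hxine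
  have hsx : Real.sign (x i) * M = x i := by rw [hM]; exact sgn_mul_abs (x i)
  have hkey : B i j * x j = -(|B i j| * x i) := by
    have h1 : Real.sign (x i) * (|B i j| * M + Real.sign (x i) * (B i j * x j)) = 0 := by
      rw [hterm]; ring
    have h2 : |B i j| * (Real.sign (x i) * M) +
        (Real.sign (x i) * Real.sign (x i)) * (B i j * x j) = 0 := by linarith [h1]; 
    rw [hsx, hs2] at h2
    linarith
  -- conclude
  have hBs : B i j * Real.sign (B i j) = |B i j| := by
    rw [mul_comm]; exact sgn_mul_self (B i j)
  apply mul_left_cancel₀ hBij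
  rw [hkey]
  have : B i j * (-Real.sign (B i j) * x i) = -((B i j * Real.sign (B i j)) * x i) := by ring
  rw [this, hBs]

/-- The sign vector is in the kernel. -/
private lemma lam_ker {n : ℕ} (B : Matrix (Fin n) (Fin n) ℝ)
    (lam : Fin n → ℝ) (hpm : ∀ i, lam i = 1 ∨ lam i = -1)
    (heq : ∀ i, B i i = ∑ j ∈ Finset.univ.erase i, |B i j|)
    (hsign : ∀ i j, i ≠ j → B i j ≠ 0 → Real.sign (B i j) = -(lam i * lam j)) :
    B.mulVec lam = 0 := by
  funext i
  have hterm : ∀ j ∈ Finset.univ.erase i, B i j * lam j = -(|B i j| * lam i) := by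
    intro j hj
    have hji : j ≠ i := (Finset.mem_erase.mp hj).1
    by_cases hB : B i j = 0
    · simp [hB]
    · have hs := hsign i j (Ne.symm hji) hB
      have hl2 : lam j * lam j = 1 := by rcases hpm j with h | h <;> rw [h] <;> norm_num
      have hBval : B i j = -(lam i * lam j) * |B i j| := by
        conv_lhs => rw [← sgn_mul_abs (B i j)]
        rw [hs]
      linear_combination lam j * hBval - lam i * |B i j| * hl2
  have hmv : B.mulVec lam i = ∑ j ∈ Finset.univ.erase i, B i j * lam j + B i i * lam i := by
    have h0 : B.mulVec lam i = ∑ j, B i j * lam j := by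
      simp [Matrix.mulVec, dotProduct]
    rw [h0, ← Finset.sum_erase_add Finset.univ _ (Finset.mem_univ i)]
  simp only [Pi.zero_apply]
  rw [hmv, Finset.sum_congr rfl hterm, heq i]
  rw [Finset.sum_neg_distrib, ← Finset.sum_mul]
  ring

/-- for a real symmetric diagonally dominant matrix `B` with connected
off-diagonal nonzero-pattern graph: `ker B ≠ 0` iff equality `b_ii = Σ_{j≠i}|b_ij|`
holds for all `i` and there are signs `λ_i ∈ {1,-1}` with `sign (b_ij) = -λ_i λ_j`
whenever `i ≠ j`, `b_ij ≠ 0`; and in that case `ker B` is spanned by `(λ₁,…,λ_n)ᵀ`. -/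
theorem stmt_3 {n : ℕ} (B : Matrix (Fin n) (Fin n) ℝ)
    (hsymm : B.IsSymm)
    (hdom : ∀ i, ∑ j ∈ Finset.univ.erase i, |B i j| ≤ B i i)
    (hconn : (SimpleGraph.fromRel fun i j => B i j ≠ 0).Connected) :
    ((LinearMap.ker B.mulVecLin ≠ ⊥) ↔
      ((∀ i, B i i = ∑ j ∈ Finset.univ.erase i, |B i j|) ∧
        ∃ lam : Fin n → ℝ, (∀ i, lam i = 1 ∨ lam i = -1) ∧
          ∀ i j, i ≠ j → B i j ≠ 0 → Real.sign (B i j) = -(lam i * lam j))) ∧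
    (∀ lam : Fin n → ℝ, (∀ i, lam i = 1 ∨ lam i = -1) →
      (∀ i, B i i = ∑ j ∈ Finset.univ.erase i, |B i j|) →
      (∀ i j, i ≠ j → B i j ≠ 0 → Real.sign (B i j) = -(lam i * lam j)) →
      LinearMap.ker B.mulVecLin = Submodule.span ℝ {lam}) := by
  have hne : Nonempty (Fin n) := hconn.nonempty
  -- adjacency gives off-diagonal nonzero both ways
  have hadj : ∀ a b : Fin n, (SimpleGraph.fromRel fun i j => B i j ≠ 0).Adj a b →
      a ≠ b ∧ B a b ≠ 0 := by
    intro a b h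
    rw [SimpleGraph.fromRel_adj] at h
    refine ⟨h.1, ?_⟩
    rcases h.2 with h2 | h2
    · exact h2
    · rw [← hsymm.apply a b]; exact h2
  constructor
  · constructor
    · -- forward direction
      intro hker
      obtain ⟨x, hxmem, hxne⟩ := (Submodule.ne_bot_iff _).mp hker
      have hx : B.mulVec x = 0 := by
        rw [← Matrix.mulVecLin_apply]; exact LinearMap.mem_ker.mp hxmem
      obtain ⟨i, hmax⟩ := Finite.exists_max (fun j => |x j|)
      have hpos : 0 < |x i| := by
        obtain ⟨k, hk⟩ := Function.ne_iff.mp hxne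
        exact lt_of_lt_of_le (abs_pos.mpr hk) (hmax k)
      -- propagate: all coordinates have maximal absolute value
      have hall : ∀ j, |x j| = |x i| := by
        intro j
        refine walk_prop (G := SimpleGraph.fromRel fun i j => B i j ≠ 0)
          (fun a => |x a| = |x i|) ?_ ((hconn i j).some) rfl
        intro a b hab ha
        obtain ⟨hne', hB⟩ := hadj a b hab
        have hmaxa : ∀ k, |x k| ≤ |x a| := fun k => by rw [ha]; exact hmax k
        have hposa : 0 < |x a| := by rw [ha]; exact hpos
        have := (key B hdom x hx a hmaxa hposa).2 b (Ne.symm hne') hB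
        rw [this, abs_mul, abs_neg]
        have hs : |Real.sign (B a b)| = 1 := by
          rcases Real.sign_apply_eq_of_ne_zero _ hB with hs | hs <;> rw [hs] <;> norm_num
        rw [hs, one_mul, ha]
      have hmaxj : ∀ j k, |x k| ≤ |x j| := fun j k => by rw [hall j]; exact hmax k
      have hposj : ∀ j, 0 < |x j| := fun j => by rw [hall j]; exact hpos
      refine ⟨fun i' => (key B hdom x hx i' (hmaxj i') (hposj i')).1,
        fun j => Real.sign (x j), ?_, ?_⟩
      · intro j
        exact (Real.sign_apply_eq_of_ne_zero _ (abs_pos.mp (hposj j))).symm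
      · intro a b hne' hB
        have hxb := (key B hdom x hx a (hmaxj a) (hposj a)).2 b (Ne.symm hne') hB
        have hsa := sgn_sq (abs_pos.mp (hposj a))
        show Real.sign (B a b) = -(Real.sign (x a) * Real.sign (x b))
        rcases Real.sign_apply_eq_of_ne_zero _ hB with hs | hs
        · rw [hs] at hxb ⊢
          have hxb' : x b = x a := by rw [hxb]; ring
          rw [hxb']
          linear_combination hsa
        · rw [hs] at hxb ⊢
          have hxb' : x b = -x a := by rw [hxb]; ring
          rw [hxb', Real.sign_neg]
          linear_combination -hsa
    · -- backward direction
      rintro ⟨heq, lam, hpm, hsign⟩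
      have hk : B.mulVec lam = 0 := lam_ker B lam hpm heq hsign
      refine (Submodule.ne_bot_iff _).mpr ⟨lam, ?_, ?_⟩
      · rw [LinearMap.mem_ker, Matrix.mulVecLin_apply, hk]
      · obtain ⟨i⟩ := hne
        intro h
        rcases hpm i with hl | hl <;> rw [congrFun h i] at hl <;> norm_num at hl
  · -- second part: kernel is spanned by lam
    intro lam hpm heq hsign
    apply le_antisymm
    · -- ker ≤ span
      intro x hxmem
      have hx : B.mulVec x = 0 := by
        rw [← Matrix.mulVecLin_apply]; exact LinearMap.mem_ker.mp hxmem
      by_cases hxne : x = 0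
      · rw [hxne]; exact Submodule.zero_mem _
      obtain ⟨i, hmax⟩ := Finite.exists_max (fun j => |x j|)
      have hpos : 0 < |x i| := by
        obtain ⟨k, hk⟩ := Function.ne_iff.mp hxne
        exact lt_of_lt_of_le (abs_pos.mpr hk) (hmax k)
      have hall : ∀ j, |x j| = |x i| ∧ x j * lam j = x i * lam i := by
        intro j
        refine walk_prop (G := SimpleGraph.fromRel fun i j => B i j ≠ 0)
          (fun a => |x a| = |x i| ∧ x a * lam a = x i * lam i) ?_ ((hconn i j).some) ⟨rfl, rfl⟩
        intro a b hab ⟨ha, ha2⟩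
        obtain ⟨hne', hB⟩ := hadj a b hab
        have hmaxa : ∀ k, |x k| ≤ |x a| := fun k => by rw [ha]; exact hmax k
        have hposa : 0 < |x a| := by rw [ha]; exact hpos
        have hxb := (key B hdom x hx a hmaxa hposa).2 b (Ne.symm hne') hB
        rw [hsign a b hne' hB] at hxb
        have hl2 : lam b * lam b = 1 := by rcases hpm b with h | h <;> rw [h] <;> norm_num
        constructor
        · rw [hxb, abs_mul, abs_neg, abs_neg, abs_mul]
          have h1 : |lam a| = 1 := by rcases hpm a with h | h <;> rw [h] <;> norm_num
          have h2 : |lam b| = 1 := by rcases hpm b with h | h <;> rw [h] <;> norm_num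
          rw [h1, h2, one_mul, one_mul, ha]
        · rw [hxb]
          calc - -(lam a * lam b) * x a * lam b = (x a * lam a) * (lam b * lam b) := by ring
            _ = x a * lam a := by rw [hl2, mul_one]
            _ = x i * lam i := ha2
      rw [Submodule.mem_span_singleton]
      refine ⟨x i * lam i, ?_⟩
      funext j
      have hl2 : lam j * lam j = 1 := by rcases hpm j with h | h <;> rw [h] <;> norm_num
      have hc := (hall j).2
      show (x i * lam i) * lam j = x j
      linear_combination lam j * hc.symm + x j * hl2
    · -- span ≤ ker
      rw [Submodule.span_le, Set.singleton_subset_iff]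
      rw [SetLike.mem_coe, LinearMap.mem_ker, Matrix.mulVecLin_apply]
      exact lam_ker B lam hpm heq hsign
end

section
/- Let (V,d) be a cochain complex of vector spaces and h : V → V a degree −1 map such that V = ker[h,d] ⊕ im[h,d] and ker d = ker([h,d]|_{ker d}) ⊕ im([h,d]|_{ker d}), where [h,d] = hd + dh. Then the inclusion of the subcomplex (ker[h,d], d) into (V,d) is a quasi-isomorphism. -/
/-- if `(V,d)` is a (ℤ-graded) complex of vector spaces, `h` a degree `-1`
map, `L = [h,d] = hd + dh`, and `V = ker L ⊕ im L` as well as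
`ker d = ker (L|_{ker d}) ⊕ im (L|_{ker d})`, then the inclusion of the subcomplex
`(ker L, d)` into `(V, d)` is a quasi-isomorphism (bijective on cohomology). -/
theorem stmt_4 {K V : Type} [Field K] [AddCommGroup V] [Module K V]
    (G : ℤ → Submodule K V)
    (d h : V →ₗ[K] V)
    (hdd : ∀ x, d (d x) = 0)
    (hGd : ∀ n : ℤ, ∀ x ∈ G n, d x ∈ G (n + 1))
    (hGh : ∀ n : ℤ, ∀ x ∈ G n, h x ∈ G (n - 1))
    (hGsup : (⨆ n, G n) = ⊤)
    -- L = [h,d] = h∘d + d∘h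
    (L : V →ₗ[K] V) (hL : ∀ x, L x = h (d x) + d (h x))
    -- V = ker [h,d] ⊕ im [h,d]
    (hcompl : IsCompl (LinearMap.ker L) (LinearMap.range L))
    -- ker d = ker([h,d]|_{ker d}) ⊕ im([h,d]|_{ker d})
    (hker : (LinearMap.ker L ⊓ LinearMap.ker d) ⊔
        Submodule.map L (LinearMap.ker d) = LinearMap.ker d)
    (hker' : Disjoint (LinearMap.ker L ⊓ LinearMap.ker d)
        (Submodule.map L (LinearMap.ker d))) :
    -- surjectivity on cohomology
    (∀ x, d x = 0 → ∃ y z, y ∈ LinearMap.ker L ∧ d y = 0 ∧ x = y + d z) ∧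
    -- injectivity on cohomology
    (∀ y ∈ LinearMap.ker L, d y = 0 → (∃ z, d z = y) →
      ∃ z ∈ LinearMap.ker L, d z = y) := by
  have hdL : ∀ x, d (L x) = L (d x) := by
    intro x
    rw [hL, hL]
    simp [map_add, hdd x, hdd (h x)]
  constructor
  · intro x hx
    have hxk : x ∈ LinearMap.ker d := hx
    rw [← hker] at hxk
    rcases Submodule.mem_sup.1 hxk with ⟨u, hu, v, hv, huv⟩
    rcases hv with ⟨w, hw, rfl⟩
    refine ⟨u, h w, hu.1, hu.2, ?_⟩
    have hw' : d w = 0 := hw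
    rw [← huv, hL w, hw', map_zero, zero_add]
  · intro y hy hdy ⟨z, hz⟩
    -- decompose z = a + L b
    have hz' : z ∈ LinearMap.ker L ⊔ LinearMap.range L := by
      rw [hcompl.sup_eq_top]; trivial
    rcases Submodule.mem_sup.1 hz' with ⟨a, ha, v, hv, hav⟩
    rcases hv with ⟨b, rfl⟩
    refine ⟨a, ha, ?_⟩
    have hda : L (d a) = 0 := by
      rw [← hdL a, ha, map_zero]
    have key : y - d a ∈ LinearMap.ker L ⊓ LinearMap.range L := by
      constructor
      · exact LinearMap.mem_ker.2 (by rw [map_sub, LinearMap.mem_ker.1 hy, hda, sub_zero])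
      · exact ⟨d b, by rw [← hdL b, ← hz, ← hav, map_add, add_sub_cancel_left]⟩
    have : y - d a = 0 := by
      have := hcompl.disjoint.eq_bot ▸ key
      simpa using this
    exact (sub_eq_zero.1 this).symm
end

section
/- Let A be a unital algebra over a commutative ℚ-algebra k with k → A split. Define the map i : Ω̄ⁿA → Ω̄^{n−1}A by i(a₀ da₁⋯da_n) = Σ_{ℓ=1}^n (−1)^{(ℓ−1)(n−1)+1} [a_ℓ, da_{ℓ+1}⋯da_n a₀ da₁⋯da_{ℓ−1}]. Then i vanishes on the subspace of graded commutators [ΩA, ΩA], and hence descends to a map DR^•A → Ω^{•−1}A on the noncommutative de Rham complex DR A = ΩA/[ΩA,ΩA]. -/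
/-!
Write `δ a` for `da`. It suffices to show `i (y z) = (-1)^{mn} i (z y)` for `y ∈ Ωᵐ`, `z ∈ Ωⁿ`.
Since `i` is linear and `Ωᵐ` is spanned by the standard forms `a₀ da₁ ⋯ daₘ`, this reduces to
moving a standard form across `z` one factor at a time, i.e. to the rotation rules
`i (b ω) = i (ω b)` and `i (db ω) = (-1)^n i (ω db)` for standard forms `ω` of degree `n`.

Both rules come from a recursive description of the contraction formula in which `a₀` is
replaced by an arbitrary coefficient and each step moves `da₁` into the coefficient. For `db`
this recursion and the single Leibniz identity `db a₀ = d(b a₀) - b da₀` suffice. For `b`, the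
product `ω b` is first expanded into standard forms by pushing `b` through `da₁ ⋯ daₙ` with the
Leibniz rule, and the recursion is checked to be compatible with that expansion.
-/

namespace NCForms

lemma ofFn_getD_eq_map_take {α β : Type*} (f : α → β) (L : List α) {m : ℕ} (hm : m ≤ L.length)
    (x : α) : List.ofFn (fun i : Fin m => f (L.getD i x)) = (L.take m).map f := by
  refine List.ext_getElem (by simpa using hm) fun j h₁ _ => ?_
  simp only [List.length_ofFn] at h₁
  simp [List.getElem?_eq_getElem (h₁.trans_le hm)]

lemma ofFn_getD_eq_map_drop {α β : Type*} (f : α → β) (L : List α) (m : ℕ) (x : α) :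
    List.ofFn (fun i : Fin (L.length - m) => f (L.getD (m + i) x)) = (L.drop m).map f := by
  refine List.ext_getElem (by simp) fun j h₁ _ => ?_
  simp only [List.length_ofFn] at h₁
  simp [List.getElem?_eq_getElem (show m + j < L.length by omega)]

section StandardForms

variable {A Ω F : Type*} [Ring Ω] [FunLike F A Ω] (ι : F) (δ : A → Ω)

def diffProd (L : List A) : Ω := (L.map δ).prod

@[simp] lemma diffProd_nil : diffProd δ [] = 1 := rfl

@[simp] lemma diffProd_cons (x : A) (L : List A) : diffProd δ (x :: L) = δ x * diffProd δ L :=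
  List.prod_cons

lemma diffProd_append (L M : List A) : diffProd δ (L ++ M) = diffProd δ L * diffProd δ M := by
  simp [diffProd]

def standardForms (n : ℕ) : Set Ω :=
  {w | ∃ (a₀ : A) (L : List A), L.length = n ∧ w = ι a₀ * diffProd δ L}

/-- `contraction e ω [a₁, …, aₙ]` is the formula for `i (a₀ da₁ ⋯ daₙ)` with `ω` in place of `a₀`
and the sign exponent `n - 1` frozen to `e`: each step splits off the term `ℓ = 1` and moves `da₁`
into the coefficient. -/
def contraction (e : ℕ) : Ω → List A → Ω
  | _, [] => 0
  | ω, x :: μ =>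
    -(ι x * (diffProd δ μ * ω) - diffProd δ μ * ω * ι x) + (-1 : ℤ) ^ e • contraction e (ω * δ x) μ

lemma contraction_add (e : ℕ) (ω₁ ω₂ : Ω) (μ : List A) :
    contraction ι δ e (ω₁ + ω₂) μ = contraction ι δ e ω₁ μ + contraction ι δ e ω₂ μ := by
  induction μ generalizing ω₁ ω₂ with
  | nil => simp [contraction]
  | cons x μ ih =>
    simp only [contraction, add_mul, mul_add, ih, smul_add]
    abel

lemma contraction_append_singleton (e : ℕ) (ω : Ω) (μ : List A) (b : A) :
    contraction ι δ e ω (μ ++ [b]) = contraction ι δ e (δ b * ω) μ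
      + (-1 : ℤ) ^ (μ.length * e + 1) • (ι b * (ω * diffProd δ μ) - ω * diffProd δ μ * ι b) := by
  induction μ generalizing ω with
  | nil => simp [contraction]
  | cons x μ ih =>
    rw [List.cons_append, contraction, ih, contraction, smul_add, smul_smul, ← pow_add,
      List.length_cons, show e + (μ.length * e + 1) = (μ.length + 1) * e + 1 by ring]
    simp only [diffProd_append, diffProd_cons, diffProd_nil, mul_one, mul_assoc]
    abel

lemma sum_contraction_cons (e : ℕ) (ω : Ω) (x : A) (l : List (ℤ × List A)) :
    (l.map fun p => p.1 • contraction ι δ e ω (x :: p.2)).sum =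
      -(ι x * ((l.map fun p => p.1 • diffProd δ p.2).sum * ω)
        - (l.map fun p => p.1 • diffProd δ p.2).sum * ω * ι x)
      + (-1 : ℤ) ^ e • (l.map fun p => p.1 • contraction ι δ e (ω * δ x) p.2).sum := by
  induction l with
  | nil => simp
  | cons p l ih =>
    simp only [List.map_cons, List.sum_cons, ih]
    simp only [contraction, add_mul, mul_add, smul_mul_assoc, mul_smul_comm]
    module

def IsContraction {J : Type*} [FunLike J Ω Ω] (i : J) : Prop :=
  ∀ (a₀ : A) (L : List A), i (ι a₀ * diffProd δ L) = contraction ι δ (L.length - 1) (ι a₀) L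

variable [Ring A]

lemma contraction_eq_sum (e : ℕ) (ω : Ω) (μ : List A) :
    contraction ι δ e ω μ = ∑ j ∈ Finset.range μ.length, (-1 : ℤ) ^ (j * e + 1) •
      (ι (μ.getD j 1) * (diffProd δ (μ.drop (j + 1)) * ω * diffProd δ (μ.take j))
        - diffProd δ (μ.drop (j + 1)) * ω * diffProd δ (μ.take j) * ι (μ.getD j 1)) := by
  induction μ generalizing ω with
  | nil => simp [contraction]
  | cons x μ ih =>
    rw [contraction, ih, Finset.smul_sum, List.length_cons, Finset.sum_range_succ', add_comm]
    congr 1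
    · refine Finset.sum_congr rfl fun j _ => ?_
      rw [smul_smul, ← pow_add, show e + (j * e + 1) = (j + 1) * e + 1 by ring]
      simp only [List.getD_cons_succ, List.drop_succ_cons, List.take_succ_cons, diffProd_cons,
        mul_assoc]
    · simp

lemma setOf_ofFn_eq_standardForms (n : ℕ) :
    {w : Ω | ∃ a : ℕ → A, w = ι (a 0) * (List.ofFn fun j : Fin n => δ (a (j.1 + 1))).prod}
      = standardForms ι δ n := by
  ext w
  constructor
  · rintro ⟨a, rfl⟩
    exact ⟨a 0, List.ofFn fun j : Fin n => a (j.1 + 1), by simp,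
      by simp [diffProd, List.map_ofFn, Function.comp_def]⟩
  · rintro ⟨a₀, L, rfl, rfl⟩
    exact ⟨fun j => (a₀ :: L).getD j 1, by simp [diffProd]⟩

lemma isContraction_of_sum_eq {J : Type*} [FunLike J Ω Ω] {i : J} (hi : ∀ (n : ℕ) (a : ℕ → A),
      i (ι (a 0) * (List.ofFn fun j : Fin n => δ (a (j.1 + 1))).prod)
        = ∑ l ∈ Finset.Icc 1 n, ((-1 : ℤ) ^ ((l - 1) * (n - 1) + 1)) •
            (ι (a l) *
               ((List.ofFn fun j : Fin (n - l) => δ (a (l + 1 + j.1))).prod * ι (a 0) *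
                 (List.ofFn fun j : Fin (l - 1) => δ (a (1 + j.1))).prod)
             - ((List.ofFn fun j : Fin (n - l) => δ (a (l + 1 + j.1))).prod * ι (a 0) *
                 (List.ofFn fun j : Fin (l - 1) => δ (a (1 + j.1))).prod) * ι (a l))) :
    IsContraction ι δ i := by
  intro a₀ L
  have key := hi L.length fun j => (a₀ :: L).getD j 1
  simp only [List.getD_cons_zero, List.getD_cons_succ] at key
  rw [ofFn_getD_eq_map_take δ L le_rfl, List.take_length] at key
  refine key.trans ?_
  rw [contraction_eq_sum, ← Finset.Ico_add_one_right_eq_Icc, Finset.sum_Ico_eq_sum_range,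
    Nat.add_sub_cancel]
  refine Finset.sum_congr rfl fun j hj => ?_
  have hj : j < L.length := Finset.mem_range.1 hj
  have hdrop : (List.ofFn fun k : Fin (L.length - (1 + j)) => δ ((a₀ :: L).getD (1 + j + 1 + k) 1))
      = (L.drop (j + 1)).map δ := by
    rw [add_comm 1 j, ← ofFn_getD_eq_map_drop δ L (j + 1) 1]
    simp only [add_right_comm (j + 1) 1, List.getD_cons_succ]
  have htake : (List.ofFn fun k : Fin (1 + j - 1) => δ ((a₀ :: L).getD (1 + k) 1))
      = (L.take j).map δ := by
    rw [add_tsub_cancel_left, ← ofFn_getD_eq_map_take δ L hj.le 1]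
    simp only [add_comm 1, List.getD_cons_succ]
  rw [hdrop, htake, add_tsub_cancel_left, add_comm 1 j, List.getD_cons_succ]
  rfl

/-- The terms `(±1, [a₁, …, aⱼ aⱼ₊₁, …, aₙ, b])` produced by pushing `b` through `da₁ ⋯ daₙ` with
the Leibniz rule `daⱼ c = d(aⱼ c) - aⱼ dc`. -/
def leibnizTerms (b : A) : List A → List (ℤ × List A)
  | [] => []
  | [x] => [(1, [x * b])]
  | x :: y :: ρ => ((-1) ^ (ρ.length + 1), x * y :: (ρ ++ [b])) ::
      (leibnizTerms b (y :: ρ)).map fun p => (p.1, x :: p.2)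

lemma length_eq_of_mem_leibnizTerms (b : A) {ν : List A} {p : ℤ × List A}
    (hp : p ∈ leibnizTerms b ν) : p.2.length = ν.length := by
  induction ν generalizing p with
  | nil => simp [leibnizTerms] at hp
  | cons x ν ih =>
    rcases ν with _ | ⟨y, ρ⟩
    · simp_all [leibnizTerms]
    · simp only [leibnizTerms, List.mem_cons, List.mem_map] at hp
      rcases hp with rfl | ⟨q, hq, rfl⟩
      · simp
      · simp [ih hq]

lemma diffProd_cons_mul (hδ : ∀ x y, δ (x * y) = δ x * ι y + ι x * δ y) (b x : A) (ν : List A) :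
    diffProd δ (x :: ν) * ι b = ((leibnizTerms b (x :: ν)).map fun p => p.1 • diffProd δ p.2).sum
      + (-1 : ℤ) ^ (ν.length + 1) • (ι x * diffProd δ (ν ++ [b])) := by
  induction ν generalizing x with
  | nil => simp [leibnizTerms, hδ]
  | cons y ρ ih =>
    rw [diffProd_cons, mul_assoc, ih, mul_add, ← List.sum_map_mul_left]
    simp only [leibnizTerms, List.map_cons, List.sum_cons, List.map_map, Function.comp_def,
      diffProd_cons, mul_smul_comm, hδ, List.length_cons, List.cons_append, pow_succ, add_mul,
      mul_assoc]
    module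

variable [RingHomClass F A Ω]

lemma contraction_leibnizTerms (hδ : ∀ x y, δ (x * y) = δ x * ι y + ι x * δ y) (e : ℕ)
    (b x : A) (ν : List A) (ω : Ω) :
    ((leibnizTerms b (x :: ν)).map fun p => p.1 • contraction ι δ e ω p.2).sum
        + (-1 : ℤ) ^ (ν.length + 1) • contraction ι δ e (ω * ι x) (ν ++ [b])
      = contraction ι δ e (ι b * ω) (x :: ν) := by
  induction ν generalizing x ω with
  | nil => simp [leibnizTerms, contraction, mul_assoc]
  | cons y ρ ih =>
    have hterms := diffProd_cons_mul ι δ hδ b y ρ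
    have hcontr := ih y (ω * δ x)
    simp only [leibnizTerms, List.map_cons, List.sum_cons, List.map_map, Function.comp_def,
      sum_contraction_cons]
    rw [eq_sub_of_add_eq hterms.symm, eq_sub_of_add_eq hcontr]
    simp only [contraction, hδ, map_mul, mul_add, contraction_add, List.cons_append,
      List.length_cons, diffProd_cons, pow_succ, mul_assoc, sub_mul, mul_sub, smul_mul_assoc,
      mul_smul_comm, smul_add, smul_sub]
    module

variable {ι δ} {J : Type*} [FunLike J Ω Ω] [AddMonoidHomClass J Ω Ω] {i : J}

lemma IsContraction.rotate_diff (hi : IsContraction ι δ i)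
    (hδ : ∀ x y, δ (x * y) = δ x * ι y + ι x * δ y) (b a₀ : A) (L : List A) :
    i (δ b * (ι a₀ * diffProd δ L)) = (-1 : ℤ) ^ L.length • i (ι a₀ * diffProd δ L * δ b) := by
  have hleft : δ b * (ι a₀ * diffProd δ L)
      = ι 1 * diffProd δ (b * a₀ :: L) - ι b * diffProd δ (a₀ :: L) := by
    simp only [diffProd_cons, map_one, one_mul, hδ, add_mul, mul_assoc, add_sub_cancel_right]
  have hright : ι a₀ * diffProd δ L * δ b = ι a₀ * diffProd δ (L ++ [b]) := by
    simp [diffProd_append, mul_assoc]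
  have hsign : ∀ (n : ℕ) (v : Ω), (-1 : ℤ) ^ n • ((-1 : ℤ) ^ (n * n + 1) • v) = -v := fun n v => by
    rw [smul_smul, ← pow_add, show n + (n * n + 1) = n * (n + 1) + 1 by ring, pow_succ,
      (Nat.even_mul_succ_self n).neg_one_pow, one_mul, neg_one_smul]
  rw [hleft, map_sub, hright, hi, hi, hi]
  simp only [List.length_cons, List.length_append, List.length_nil, zero_add, Nat.add_sub_cancel,
    contraction, contraction_append_singleton, map_one, one_mul, hδ, mul_add, contraction_add]
  simp only [smul_add, hsign, map_mul, mul_one, mul_assoc, smul_sub]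
  module

lemma IsContraction.rotate_scalar (hi : IsContraction ι δ i)
    (hδ : ∀ x y, δ (x * y) = δ x * ι y + ι x * δ y) (b a₀ : A) (L : List A) :
    i (ι b * (ι a₀ * diffProd δ L)) = i (ι a₀ * diffProd δ L * ι b) := by
  rcases L with _ | ⟨x, ν⟩
  · have h0 : ∀ a, i (ι a) = 0 := fun a => by simpa [contraction] using hi a []
    simp only [diffProd_nil, mul_one, ← map_mul, h0]
  rw [← mul_assoc, ← map_mul, hi, mul_assoc, diffProd_cons_mul ι δ hδ, mul_add,
    ← List.sum_map_mul_left, map_add, map_list_sum, List.map_map, mul_smul_comm, map_zsmul,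
    ← mul_assoc, ← map_mul, hi, map_mul, map_mul, ← contraction_leibnizTerms ι δ hδ]
  congr 2
  · refine List.map_congr_left fun p hp => ?_
    rw [Function.comp_apply, mul_smul_comm, map_zsmul, hi, length_eq_of_mem_leibnizTerms b hp]
  · simp

end StandardForms

section Graded

variable {A Ω F k : Type*} [Ring Ω] [FunLike F A Ω] {ι : F} {δ : A → Ω} [CommRing k]
  [Algebra k Ω] {G : ℕ → Submodule k Ω}

lemma mul_diffProd_mem (hG : ∀ n, G n = Submodule.span k (standardForms ι δ n)) (a₀ : A)
    (L : List A) : ι a₀ * diffProd δ L ∈ G L.length :=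
  hG _ ▸ Submodule.subset_span ⟨a₀, L, rfl, rfl⟩

variable [Ring A] [RingHomClass F A Ω] {i : Ω →ₗ[k] Ω}

lemma IsContraction.rotate_diff_of_mem (hi : IsContraction ι δ i)
    (hδ : ∀ x y, δ (x * y) = δ x * ι y + ι x * δ y)
    (hG : ∀ n, G n = Submodule.span k (standardForms ι δ n)) (b : A) {n : ℕ} {u : Ω}
    (hu : u ∈ G n) : i (δ b * u) = (-1 : ℤ) ^ n • i (u * δ b) := by
  rw [hG] at hu
  refine LinearMap.eqOn_span (f := i ∘ₗ LinearMap.mulLeft k (δ b))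
    (g := (-1 : ℤ) ^ n • i ∘ₗ LinearMap.mulRight k (δ b)) ?_ hu
  rintro _ ⟨a₀, L, rfl, rfl⟩
  exact hi.rotate_diff hδ b a₀ L

lemma IsContraction.rotate_scalar_of_mem (hi : IsContraction ι δ i)
    (hδ : ∀ x y, δ (x * y) = δ x * ι y + ι x * δ y)
    (hG : ∀ n, G n = Submodule.span k (standardForms ι δ n)) (b : A) {n : ℕ} {u : Ω}
    (hu : u ∈ G n) : i (ι b * u) = i (u * ι b) := by
  rw [hG] at hu
  refine LinearMap.eqOn_span (f := i ∘ₗ LinearMap.mulLeft k (ι b))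
    (g := i ∘ₗ LinearMap.mulRight k (ι b)) ?_ hu
  rintro _ ⟨a₀, L, rfl, rfl⟩
  exact hi.rotate_scalar hδ b a₀ L

lemma IsContraction.rotate_standard (hi : IsContraction ι δ i)
    (hδ : ∀ x y, δ (x * y) = δ x * ι y + ι x * δ y)
    (hG : ∀ n, G n = Submodule.span k (standardForms ι δ n))
    (hGmul : ∀ m n : ℕ, ∀ x ∈ G m, ∀ y ∈ G n, x * y ∈ G (m + n))
    (c : A) (B : List A) {n : ℕ} {z : Ω} (hz : z ∈ G n) :
    i (ι c * diffProd δ B * z) = (-1 : ℤ) ^ (B.length * n) • i (z * (ι c * diffProd δ B)) := by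
  induction B generalizing c n z with
  | nil => simpa using hi.rotate_scalar_of_mem hδ hG c hz
  | cons x B ih =>
    have hc : ι c ∈ G 0 := by simpa using mul_diffProd_mem hG c []
    have hx : δ x ∈ G 1 := by simpa using mul_diffProd_mem hG 1 [x]
    have hB : diffProd δ B ∈ G B.length := by simpa using mul_diffProd_mem hG 1 B
    have hzc : z * ι c ∈ G n := hGmul _ _ _ hz _ hc
    have hsign : (-1 : ℤ) ^ (B.length + n) * (-1) ^ (B.length * (n + 1))
        = (-1) ^ ((B.length + 1) * n) := by
      rw [← pow_add, show B.length + n + B.length * (n + 1) = 2 * B.length + (B.length + 1) * n by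
        ring, pow_add, pow_mul, neg_one_sq, one_pow, one_mul]
    calc i (ι c * diffProd δ (x :: B) * z)
        = i (ι c * (δ x * (diffProd δ B * z))) := by simp [mul_assoc]
      _ = i (δ x * (diffProd δ B * z) * ι c) :=
          hi.rotate_scalar_of_mem hδ hG c (hGmul _ _ _ hx _ (hGmul _ _ _ hB _ hz))
      _ = i (δ x * (diffProd δ B * (z * ι c))) := by simp only [mul_assoc]
      _ = (-1 : ℤ) ^ (B.length + n) • i (diffProd δ B * (z * ι c) * δ x) :=
          hi.rotate_diff_of_mem hδ hG x (hGmul _ _ _ hB _ hzc)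
      _ = (-1 : ℤ) ^ (B.length + n) • i (ι 1 * diffProd δ B * (z * ι c * δ x)) := by
          simp [mul_assoc]
      _ = (-1 : ℤ) ^ ((B.length + 1) * n) • i (z * (ι c * diffProd δ (x :: B))) := by
          rw [ih 1 (hGmul _ _ _ hzc _ hx), smul_smul, hsign]
          simp [mul_assoc]

lemma IsContraction.map_mul_comm_of_mem (hi : IsContraction ι δ i)
    (hδ : ∀ x y, δ (x * y) = δ x * ι y + ι x * δ y)
    (hG : ∀ n, G n = Submodule.span k (standardForms ι δ n))
    (hGmul : ∀ m n : ℕ, ∀ x ∈ G m, ∀ y ∈ G n, x * y ∈ G (m + n))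
    {m n : ℕ} {y z : Ω} (hy : y ∈ G m) (hz : z ∈ G n) :
    i (y * z) = (-1 : ℤ) ^ (m * n) • i (z * y) := by
  rw [hG] at hy
  refine LinearMap.eqOn_span (f := i ∘ₗ LinearMap.mulRight k z)
    (g := (-1 : ℤ) ^ (m * n) • i ∘ₗ LinearMap.mulLeft k z) ?_ hy
  rintro _ ⟨a₀, L, rfl, rfl⟩
  exact hi.rotate_standard hδ hG hGmul a₀ L hz

end Graded

end NCForms

open NCForms

theorem stmt_10_general {k A Ω : Type} [CommRing k]
    [Ring A] [Algebra k A] [Ring Ω] [Algebra k Ω]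
    (ι : A →ₐ[k] Ω) (d : Ω →ₗ[k] Ω) (G : ℕ → Submodule k Ω)
    (hGmul : ∀ m n : ℕ, ∀ x ∈ G m, ∀ y ∈ G n, x * y ∈ G (m + n))
    (hleib : ∀ (m : ℕ) (x : Ω), x ∈ G m → ∀ y : Ω,
      d (x * y) = d x * y + ((-1 : ℤ) ^ m) • (x * d y))
    (hspan : ∀ n : ℕ, G n = Submodule.span k
      {w : Ω | ∃ a : ℕ → A,
        w = ι (a 0) * (List.ofFn fun i : Fin n => d (ι (a (i.1 + 1)))).prod})
    -- the map i, prescribed on standard forms by the explicit contraction formula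
    (iOp : Ω →ₗ[k] Ω)
    (hi : ∀ (n : ℕ) (a : ℕ → A),
      iOp (ι (a 0) * (List.ofFn fun i : Fin n => d (ι (a (i.1 + 1)))).prod)
        = ∑ l ∈ Finset.Icc 1 n, ((-1 : ℤ) ^ ((l - 1) * (n - 1) + 1)) •
            (ι (a l) *
               ((List.ofFn fun i : Fin (n - l) => d (ι (a (l + 1 + i.1)))).prod *
                 ι (a 0) *
                 (List.ofFn fun i : Fin (l - 1) => d (ι (a (1 + i.1)))).prod)
             - ((List.ofFn fun i : Fin (n - l) => d (ι (a (l + 1 + i.1)))).prod *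
                 ι (a 0) *
                 (List.ofFn fun i : Fin (l - 1) => d (ι (a (1 + i.1)))).prod) *
               ι (a l))) :
    -- i vanishes on the span of graded commutators
    ∀ x ∈ Submodule.span k {c : Ω | ∃ (m n : ℕ) (y z : Ω),
        y ∈ G m ∧ z ∈ G n ∧ c = y * z - ((-1 : ℤ) ^ (m * n)) • (z * y)},
      iOp x = 0 := by
  have hG : ∀ n, G n = Submodule.span k (standardForms ι (fun a => d (ι a)) n) := fun n =>
    (hspan n).trans (congrArg _ (setOf_ofFn_eq_standardForms ι (fun a => d (ι a)) n))
  have hδ : ∀ x y : A, d (ι (x * y)) = d (ι x) * ι y + ι x * d (ι y) := fun x y => by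
    simpa using hleib 0 (ι x) (by simpa using mul_diffProd_mem hG x []) (ι y)
  have hcontr : IsContraction ι (fun a => d (ι a)) iOp := isContraction_of_sum_eq ι _ hi
  intro x hx
  refine LinearMap.mem_ker.1 (Submodule.span_le.2 ?_ hx)
  rintro _ ⟨m, n, y, z, hy, hz, rfl⟩
  rw [SetLike.mem_coe, LinearMap.mem_ker, map_sub, map_zsmul,
    hcontr.map_mul_comm_of_mem hδ hG hGmul hy hz, sub_self]

/-- the contraction map
`i(a₀ da₁⋯da_n) = Σ_{ℓ=1}^n (−1)^{(ℓ−1)(n−1)+1} [a_ℓ, da_{ℓ+1}⋯da_n a₀ da₁⋯da_{ℓ−1}]`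
on the differential envelope `Ω A` vanishes on the span of graded commutators
`[Ω A, Ω A]`, hence descends to the noncommutative de Rham complex
`DR A = Ω A/[Ω A, Ω A]`. -/
theorem stmt_10 {k A Ω : Type} [CommRing k] [Algebra ℚ k]
    [Ring A] [Algebra k A] [Ring Ω] [Algebra k Ω]
    (ι : A →ₐ[k] Ω) (d : Ω →ₗ[k] Ω) (G : ℕ → Submodule k Ω)
    (hsplit : ∃ p : A →ₗ[k] k, ∀ c : k, p (algebraMap k A c) = c)
    (hG0 : G 0 = LinearMap.range ι.toLinearMap)
    (hGmul : ∀ m n : ℕ, ∀ x ∈ G m, ∀ y ∈ G n, x * y ∈ G (m + n))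
    (hdG : ∀ n : ℕ, ∀ x ∈ G n, d x ∈ G (n + 1))
    (hdd : ∀ x : Ω, d (d x) = 0)
    (hleib : ∀ (m : ℕ) (x : Ω), x ∈ G m → ∀ y : Ω,
      d (x * y) = d x * y + ((-1 : ℤ) ^ m) • (x * d y))
    (hspan : ∀ n : ℕ, G n = Submodule.span k
      {w : Ω | ∃ a : ℕ → A,
        w = ι (a 0) * (List.ofFn fun i : Fin n => d (ι (a (i.1 + 1)))).prod})
    (hsup : (⨆ n, G n) = ⊤)
    -- the map i, prescribed on standard forms by the explicit contraction formula
    (iOp : Ω →ₗ[k] Ω)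
    (hi0 : ∀ a : A, iOp (ι a) = 0)
    (hi : ∀ (n : ℕ) (a : ℕ → A),
      iOp (ι (a 0) * (List.ofFn fun i : Fin n => d (ι (a (i.1 + 1)))).prod)
        = ∑ l ∈ Finset.Icc 1 n, ((-1 : ℤ) ^ ((l - 1) * (n - 1) + 1)) •
            (ι (a l) *
               ((List.ofFn fun i : Fin (n - l) => d (ι (a (l + 1 + i.1)))).prod *
                 ι (a 0) *
                 (List.ofFn fun i : Fin (l - 1) => d (ι (a (1 + i.1)))).prod)
             - ((List.ofFn fun i : Fin (n - l) => d (ι (a (l + 1 + i.1)))).prod *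
                 ι (a 0) *
                 (List.ofFn fun i : Fin (l - 1) => d (ι (a (1 + i.1)))).prod) *
               ι (a l))) :
    -- i vanishes on the span of graded commutators
    ∀ x ∈ Submodule.span k {c : Ω | ∃ (m n : ℕ) (y z : Ω),
        y ∈ G m ∧ z ∈ G n ∧ c = y * z - ((-1 : ℤ) ^ (m * n)) • (z * y)},
      iOp x = 0 :=
  stmt_10_general ι d G hGmul hleib hspan iOp hi
end

section
/- Let P denote the projection onto the harmonic part PΩ̄ = ker(Id−κ)² in the Cuntz–Quillen harmonic decomposition Ω̄ = PΩ̄ ⊕ P⊥Ω̄ where P⊥Ω̄ = im(Id−κ)². Then the antiharmonic part of the commutator subspace is everything: P⊥ [Ω,Ω]‾ = P⊥ Ω̄, i.e. P⊥Ω̄ ⊆ [Ω,Ω]‾ (the closure meaning image in Ω̄ of the span of graded commutators). -/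
/-!
On `Ωⁿ` with `n ≥ 1` the Karoubi operator satisfies `(κⁿ - 1)(κⁿ⁺¹ - 1) = (κ - 1)² u(κ)` with
`u(1) = n(n + 1)`, a unit over a `ℚ`-algebra, so `(X - 1)²` and `u` are coprime. A Bézout relation
`a (X - 1)² + b u = 1` splits `x ∈ Ωⁿ` as `(κ - 1)² a(κ) x + b(κ) u(κ) x`; the second summand lies in
`ker (1 - κ)²`, and the first is `(κ - 1) y` with `y ∈ Ωⁿ`, a graded commutator because
`κ (x dα) - x dα = -(x dα - (-1)ⁿ dα x)`. The same coprimality, applied in every degree, makes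
`ker (1 - κ)²` and `im (1 - κ)²` independent, so `P⊥` kills the harmonic summand.
-/

open Polynomial LinearMap

namespace Polynomial

theorem isCoprime_X_sub_C_of_isUnit_eval {R : Type*} [CommRing R] {u : R[X]} {a : R}
    (hu : IsUnit (u.eval a)) : IsCoprime (X - C a) u := by
  obtain ⟨c, hc⟩ : ∃ c, c * u.eval a = 1 := ⟨_, hu.val_inv_mul⟩
  obtain ⟨g, hg⟩ := X_sub_C_dvd_sub_C_eval (p := u) (a := a)
  refine ⟨-(C c * g), C c, ?_⟩
  calc -(C c * g) * (X - C a) + C c * u = C c * (u - (X - C a) * g) := by ring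
    _ = 1 := by rw [← hg, sub_sub_cancel, ← C_mul, hc, C_1]

theorem X_sub_one_sq_mul_geom_sum_mul_geom_sum {R : Type*} [CommRing R] (n : ℕ) :
    (X - 1 : R[X]) ^ 2 * ((∑ i ∈ Finset.range n, X ^ i) * ∑ i ∈ Finset.range (n + 1), X ^ i)
      = (X ^ n - 1) * (X ^ (n + 1) - 1) := by
  rw [← geom_sum_mul, ← geom_sum_mul]
  ring

theorem isCoprime_X_sub_one_sq_geom_sum_mul_geom_sum {R : Type*} [CommRing R] [Algebra ℚ R]
    {n : ℕ} (hn : n ≠ 0) :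
    IsCoprime ((X - 1 : R[X]) ^ 2)
      ((∑ i ∈ Finset.range n, X ^ i) * ∑ i ∈ Finset.range (n + 1), X ^ i) := by
  have hunit : IsUnit (algebraMap ℚ R (n * (n + 1))) :=
    (mul_ne_zero (Nat.cast_ne_zero.mpr hn) n.cast_add_one_ne_zero).isUnit.map _
  rw [← C_1]
  refine (isCoprime_X_sub_C_of_isUnit_eval ?_).pow_left
  simpa using hunit

end Polynomial

namespace Module.End

variable {R M : Type*} [CommRing R] [AddCommGroup M] [Module R M] (f : Module.End R M)

theorem one_sub_sq_eq_aeval : (1 - f) ^ 2 = aeval f ((X - 1 : R[X]) ^ 2) := by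
  rw [map_pow, map_sub, aeval_X, map_one, ← neg_sub, neg_sq]

theorem aeval_apply_mem_of_mapsTo {N : Submodule R M} (hN : Set.MapsTo f N N) (q : R[X])
    {x : M} (hx : x ∈ N) : aeval f q x ∈ N := by
  rw [aeval_endomorphism]
  exact Submodule.sum_mem _ fun n _ => N.smul_mem _ (by
    rw [Module.End.pow_apply]; exact hN.iterate n hx)

theorem exists_aeval_sub_aeval_mul_eq_zero {p q : R[X]} (hpq : IsCoprime p q) {x : M}
    (hx : aeval f (p * q) x = 0) : ∃ a : R[X], aeval f p (x - aeval f (p * a) x) = 0 := by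
  obtain ⟨a, b, hab⟩ := hpq
  refine ⟨a, ?_⟩
  have hx' : x - aeval f (p * a) x = aeval f (b * q) x := by
    rw [sub_eq_iff_eq_add, ← LinearMap.add_apply, ← map_add, mul_comm p a, add_comm, hab, map_one,
      one_apply]
  rw [hx', ← mul_apply, ← map_mul, mul_left_comm, map_mul, mul_apply, hx, map_zero]

theorem exists_isCoprime_aeval_mul_eq_zero_of_mem_iSup {ι : Sort*} (N : ι → Submodule R M)
    {p : R[X]} (h : ∀ i, ∀ x ∈ N i, ∃ q, IsCoprime p q ∧ aeval f (p * q) x = 0) {x : M}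
    (hx : x ∈ ⨆ i, N i) : ∃ q, IsCoprime p q ∧ aeval f (p * q) x = 0 := by
  refine Submodule.iSup_induction N (motive := fun x => ∃ q, IsCoprime p q ∧ aeval f (p * q) x = 0)
    hx h ⟨1, isCoprime_one_right, map_zero _⟩ fun x y hx hy => ?_
  obtain ⟨q₁, hpq₁, hx⟩ := hx
  obtain ⟨q₂, hpq₂, hy⟩ := hy
  have aeval_mul_apply_eq_zero {r s : R[X]} {v : M} (hv : aeval f s v = 0) :
      aeval f (r * s) v = 0 := by
    rw [map_mul, mul_apply, hv, map_zero]
  refine ⟨q₁ * q₂, hpq₁.mul_right hpq₂, ?_⟩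
  have hx' : aeval f (p * (q₁ * q₂)) x = 0 := by
    rw [show p * (q₁ * q₂) = q₂ * (p * q₁) by ring]; exact aeval_mul_apply_eq_zero hx
  have hy' : aeval f (p * (q₁ * q₂)) y = 0 := by
    rw [show p * (q₁ * q₂) = q₁ * (p * q₂) by ring]; exact aeval_mul_apply_eq_zero hy
  rw [map_add, hx', hy', add_zero]

theorem disjoint_ker_aeval_range_aeval {p : R[X]}
    (h : ∀ v, ∃ q, IsCoprime p q ∧ aeval f (p * q) v = 0) :
    Disjoint (ker (aeval f p)) (range (aeval f p)) := by
  refine Submodule.disjoint_def.mpr fun w hwp ⟨v, hv⟩ => ?_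
  obtain ⟨q, hpq, hv'⟩ := h v
  have hwq : w ∈ ker (aeval f q) := by
    rw [mem_ker, ← hv, ← mul_apply, ← map_mul, mul_comm, hv']
  exact Submodule.disjoint_def.mp (disjoint_ker_aeval_of_isCoprime f hpq) w hwp hwq

end Module.End

theorem LinearMap.ker_le_ker_of_disjoint_ker_range {R M : Type*} [Semiring R] [AddCommGroup M]
    [Module R M] {T P : M →ₗ[R] M} (hPr : ∀ x, P x ∈ range T) (hPk : ∀ x, x - P x ∈ ker T)
    (hT : Disjoint (ker T) (range T)) : ker T ≤ ker P := by
  intro z hz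
  refine Submodule.disjoint_def.mp hT _ ?_ (hPr z)
  have h := hPk z
  rwa [mem_ker, map_sub, mem_ker.mp hz, zero_sub, neg_eq_zero] at h

section Karoubi

variable {k A Ω : Type*} [CommRing k] [Ring A] [Algebra k A] [Ring Ω] [Algebra k Ω]

def gradedCommutatorSpan (G : ℕ → Submodule k Ω) : Submodule k Ω :=
  Submodule.span k {c : Ω | ∃ (p q : ℕ) (y z : Ω),
    y ∈ G p ∧ z ∈ G q ∧ c = y * z - ((-1 : ℤ) ^ (p * q)) • (z * y)}

variable (ι : A →ₐ[k] Ω) (d : Ω →ₗ[k] Ω) (G : ℕ → Submodule k Ω) (κ : Module.End k Ω)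

theorem karoubi_sub_self_mem_gradedCommutatorSpan (hG0 : G 0 = range ι.toLinearMap)
    (hdG : ∀ n : ℕ, ∀ x ∈ G n, d x ∈ G (n + 1))
    (hspan : ∀ n : ℕ, G n = Submodule.span k
      {w : Ω | ∃ a : ℕ → A,
        w = ι (a 0) * (List.ofFn fun i : Fin n => d (ι (a (i.1 + 1)))).prod})
    (hκ : ∀ (n : ℕ) (x : Ω), x ∈ G n → ∀ a : A,
      κ (x * d (ι a)) = ((-1 : ℤ) ^ n) • (d (ι a) * x))
    (m : ℕ) {y : Ω} (hy : y ∈ G (m + 1)) : κ y - y ∈ gradedCommutatorSpan G := by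
  rw [hspan] at hy
  refine (Submodule.span_le (p := (gradedCommutatorSpan G).comap (κ - 1)).mpr ?_ hy :)
  rintro _ ⟨a, rfl⟩
  set x := ι (a 0) * (List.ofFn fun i : Fin m => d (ι (a (i.1 + 1)))).prod
  have hx : x ∈ G m := hspan m ▸ Submodule.subset_span ⟨a, rfl⟩
  have hda : d (ι (a (m + 1))) ∈ G 1 := hdG 0 _ (hG0 ▸ ⟨a (m + 1), rfl⟩)
  have hprod : ι (a 0) * (List.ofFn fun i : Fin (m + 1) => d (ι (a (i.1 + 1)))).prod
      = x * d (ι (a (m + 1))) := by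
    rw [List.ofFn_succ', List.prod_concat, ← mul_assoc]
    rfl
  rw [SetLike.mem_coe, Submodule.mem_comap, hprod, LinearMap.sub_apply, Module.End.one_apply,
    hκ m x hx, ← neg_sub]
  exact neg_mem (Submodule.subset_span ⟨m, 1, x, _, hx, hda, by rw [mul_one]⟩)

theorem exists_isCoprime_aeval_karoubi_eq_zero [Algebra ℚ k] (hG0 : G 0 = range ι.toLinearMap)
    (hκ0 : ∀ a : A, κ (ι a) = 0)
    (hκpoly : ∀ n : ℕ, ∀ x ∈ G n, ((κ ^ n - 1) * (κ ^ (n + 1) - 1)) x = 0)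
    (m : ℕ) {x : Ω} (hx : x ∈ G m) :
    ∃ q : k[X], IsCoprime ((X - 1) ^ 2) q ∧ aeval κ ((X - 1) ^ 2 * q) x = 0 := by
  cases m with
  | zero =>
    obtain ⟨a, rfl⟩ := hG0 ▸ hx
    refine ⟨X, ?_, ?_⟩
    · rw [← C_1]
      exact (isCoprime_X_sub_C_of_isUnit_eval (by simp)).pow_left
    · rw [map_mul, Module.End.mul_apply, aeval_X]
      simp [hκ0]
  | succ m =>
    refine ⟨_, isCoprime_X_sub_one_sq_geom_sum_mul_geom_sum m.succ_ne_zero, ?_⟩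
    rw [X_sub_one_sq_mul_geom_sum_mul_geom_sum]
    simpa using hκpoly _ x hx

theorem exists_sub_karoubi_sub_self_mem_ker [Algebra ℚ k] (hκG : ∀ n : ℕ, ∀ x ∈ G n, κ x ∈ G n)
    (hκpoly : ∀ n : ℕ, ∀ x ∈ G n, ((κ ^ n - 1) * (κ ^ (n + 1) - 1)) x = 0)
    (m : ℕ) {x : Ω} (hx : x ∈ G (m + 1)) :
    ∃ y ∈ G (m + 1), x - (κ y - y) ∈ ker ((1 - κ) ^ 2) := by
  obtain ⟨a, ha⟩ := κ.exists_aeval_sub_aeval_mul_eq_zero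
    (isCoprime_X_sub_one_sq_geom_sum_mul_geom_sum m.succ_ne_zero)
    (by rw [X_sub_one_sq_mul_geom_sum_mul_geom_sum]; simpa using hκpoly _ x hx)
  refine ⟨aeval κ ((X - 1) * a) x, κ.aeval_apply_mem_of_mapsTo (hκG _) _ hx, ?_⟩
  have hy : aeval κ ((X - 1) ^ 2 * a) x
      = κ (aeval κ ((X - 1) * a) x) - aeval κ ((X - 1) * a) x := by
    rw [sq, mul_assoc, map_mul, Module.End.mul_apply, map_sub, aeval_X, map_one,
      LinearMap.sub_apply, Module.End.one_apply]
  rwa [mem_ker, Module.End.one_sub_sq_eq_aeval, ← hy]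

theorem disjoint_ker_range_one_sub_karoubi_sq [Algebra ℚ k] (hG0 : G 0 = range ι.toLinearMap)
    (hκ0 : ∀ a : A, κ (ι a) = 0)
    (hκpoly : ∀ n : ℕ, ∀ x ∈ G n, ((κ ^ n - 1) * (κ ^ (n + 1) - 1)) x = 0)
    (hsup : (⨆ n, G n) = ⊤) :
    Disjoint (ker ((1 - κ) ^ 2)) (range ((1 - κ) ^ 2)) := by
  rw [Module.End.one_sub_sq_eq_aeval]
  exact κ.disjoint_ker_aeval_range_aeval fun v =>
    κ.exists_isCoprime_aeval_mul_eq_zero_of_mem_iSup G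
      (fun m _ hx => exists_isCoprime_aeval_karoubi_eq_zero ι G κ hG0 hκ0 hκpoly m hx)
      (hsup ▸ Submodule.mem_top)

end Karoubi

theorem stmt_14_general {k A Ω : Type} [CommRing k] [Algebra ℚ k]
    [Ring A] [Algebra k A] [Ring Ω] [Algebra k Ω]
    (ι : A →ₐ[k] Ω) (d : Ω →ₗ[k] Ω) (G : ℕ → Submodule k Ω)
    (hG0 : G 0 = LinearMap.range ι.toLinearMap)
    (hdG : ∀ n : ℕ, ∀ x ∈ G n, d x ∈ G (n + 1))
    (hspan : ∀ n : ℕ, G n = Submodule.span k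
      {w : Ω | ∃ a : ℕ → A,
        w = ι (a 0) * (List.ofFn fun i : Fin n => d (ι (a (i.1 + 1)))).prod})
    (hsup : (⨆ n, G n) = ⊤)
    -- the Karoubi operator
    (κ : Module.End k Ω)
    (hκ : ∀ (n : ℕ) (x : Ω), x ∈ G n → ∀ a : A,
      κ (x * d (ι a)) = ((-1 : ℤ) ^ n) • (d (ι a) * x))
    (hκ0 : ∀ a : A, κ (ι a) = 0)
    (hκG : ∀ n : ℕ, ∀ x ∈ G n, κ x ∈ G n)
    -- the Cuntz–Quillen identity (κⁿ−1)(κ^{n+1}−1) = 0 on Ωⁿ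
    (hκpoly : ∀ n : ℕ, ∀ x ∈ G n, ((κ ^ n - 1) * (κ ^ (n + 1) - 1)) x = 0)
    -- P⊥, the projection onto im (Id−κ)² along ker (Id−κ)²
    (Pperp : Module.End k Ω)
    (hPr : ∀ x : Ω, Pperp x ∈ LinearMap.range (((1 : Module.End k Ω) - κ) ^ 2))
    (hPk : ∀ x : Ω, x - Pperp x ∈ LinearMap.ker (((1 : Module.End k Ω) - κ) ^ 2)) :
    ∀ n : ℕ, 1 ≤ n →
      Submodule.map (Pperp : Ω →ₗ[k] Ω)
          ((Submodule.span k {c : Ω | ∃ (p q : ℕ) (y z : Ω),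
              y ∈ G p ∧ z ∈ G q ∧ c = y * z - ((-1 : ℤ) ^ (p * q)) • (z * y)}) ⊓ G n)
        = Submodule.map (Pperp : Ω →ₗ[k] Ω) (G n) := by
  intro n hn
  obtain ⟨m, rfl⟩ := Nat.exists_eq_add_of_le' hn
  have hPker : ker ((1 - κ) ^ 2) ≤ ker Pperp := ker_le_ker_of_disjoint_ker_range hPr hPk
    (disjoint_ker_range_one_sub_karoubi_sq ι G κ hG0 hκ0 hκpoly hsup)
  refine le_antisymm (Submodule.map_mono inf_le_right) ?_
  rintro _ ⟨x, hx, rfl⟩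
  obtain ⟨y, hy, hxy⟩ := exists_sub_karoubi_sub_self_mem_ker G κ hκG hκpoly m hx
  refine ⟨κ y - y, ⟨karoubi_sub_self_mem_gradedCommutatorSpan ι d G κ hG0 hdG hspan hκ m hy,
    sub_mem (hκG _ y hy) hy⟩, ?_⟩
  rw [eq_comm, ← sub_eq_zero, ← map_sub]
  exact hPker hxy

/-- in the Cuntz–Quillen harmonic decomposition
`Ω̄ = PΩ̄ ⊕ P⊥Ω̄` (with `PΩ̄ = ker (Id−κ)²`, `P⊥Ω̄ = im (Id−κ)²`), the
antiharmonic part of the commutator subspace is everything: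
`P⊥ [Ω,Ω]‾ = P⊥ Ω̄`, degreewise in positive degrees. -/
theorem stmt_14 {k A Ω : Type} [CommRing k] [Algebra ℚ k]
    [Ring A] [Algebra k A] [Ring Ω] [Algebra k Ω]
    (ι : A →ₐ[k] Ω) (d : Ω →ₗ[k] Ω) (G : ℕ → Submodule k Ω)
    (hsplit : ∃ p : A →ₗ[k] k, ∀ c : k, p (algebraMap k A c) = c)
    (hG0 : G 0 = LinearMap.range ι.toLinearMap)
    (hGmul : ∀ m n : ℕ, ∀ x ∈ G m, ∀ y ∈ G n, x * y ∈ G (m + n))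
    (hdG : ∀ n : ℕ, ∀ x ∈ G n, d x ∈ G (n + 1))
    (hdd : ∀ x : Ω, d (d x) = 0)
    (hleib : ∀ (m : ℕ) (x : Ω), x ∈ G m → ∀ y : Ω,
      d (x * y) = d x * y + ((-1 : ℤ) ^ m) • (x * d y))
    (hspan : ∀ n : ℕ, G n = Submodule.span k
      {w : Ω | ∃ a : ℕ → A,
        w = ι (a 0) * (List.ofFn fun i : Fin n => d (ι (a (i.1 + 1)))).prod})
    (hsup : (⨆ n, G n) = ⊤)
    -- the Karoubi operator
    (κ : Module.End k Ω)
    (hκ : ∀ (n : ℕ) (x : Ω), x ∈ G n → ∀ a : A,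
      κ (x * d (ι a)) = ((-1 : ℤ) ^ n) • (d (ι a) * x))
    (hκ0 : ∀ a : A, κ (ι a) = 0)
    (hκG : ∀ n : ℕ, ∀ x ∈ G n, κ x ∈ G n)
    -- the Cuntz–Quillen identity (κⁿ−1)(κ^{n+1}−1) = 0 on Ωⁿ
    (hκpoly : ∀ n : ℕ, ∀ x ∈ G n, ((κ ^ n - 1) * (κ ^ (n + 1) - 1)) x = 0)
    -- P⊥, the projection onto im (Id−κ)² along ker (Id−κ)²
    (Pperp : Module.End k Ω)
    (hPr : ∀ x : Ω, Pperp x ∈ LinearMap.range (((1 : Module.End k Ω) - κ) ^ 2))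
    (hPk : ∀ x : Ω, x - Pperp x ∈ LinearMap.ker (((1 : Module.End k Ω) - κ) ^ 2))
    (hPP : ∀ x : Ω, Pperp (Pperp x) = Pperp x)
    (hPG : ∀ n : ℕ, ∀ x ∈ G n, Pperp x ∈ G n) :
    ∀ n : ℕ, 1 ≤ n →
      Submodule.map (Pperp : Ω →ₗ[k] Ω)
          ((Submodule.span k {c : Ω | ∃ (p q : ℕ) (y z : Ω),
              y ∈ G p ∧ z ∈ G q ∧ c = y * z - ((-1 : ℤ) ^ (p * q)) • (z * y)}) ⊓ G n)
        = Submodule.map (Pperp : Ω →ₗ[k] Ω) (G n) :=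
  stmt_14_general ι d G hG0 hdG hspan hsup κ hκ hκ0 hκG hκpoly Pperp hPr hPk
end

section
/- With harmonic decomposition as above, one has P⊥ dΩ̄ = (Id−κ) dΩ̄ = [dΩ, dΩ]‾, i.e. the antiharmonic part of the space of exact noncommutative forms coincides with the span of graded commutators of exact forms. -/
/-!
The exact forms of degree `n + 1` are spanned by the words `d a₀ ⋯ d aₙ`, on which `κ` acts as a
signed cyclic rotation; hence `κ ^ (n + 1) = 1` there. As `n + 1` is invertible, averaging over
the rotations shows that on such a space `1 - κ` and `(1 - κ)²` have the same image. Since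
`(κⁿ - 1)(κⁿ⁺¹ - 1) = 0` in degree `n` and the cofactor of `(1 - κ)²` in this product does not
vanish at `1`, the range of `(1 - κ)²` meets its kernel trivially; so `P⊥` is the projection onto
that range along that kernel, and on exact forms it has the same image as `1 - κ`.

Rotating the word `d x · d y` by the length of `d y` gives
`d x d y ∓ d y d x = (1 - κ ^ m) (d x d y) = (1 - κ) (∑ i < m, κ ^ i (d x d y))`; conversely
`(1 - κ) (ω d b) = ω d b ∓ d b ω` is a graded commutator.
-/

open Polynomial

theorem Polynomial.isCoprime_X_sub_C_of_isUnit_eval_s15 {R : Type*} [CommRing R] {p : R[X]} {a : R}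
    (h : IsUnit (p.eval a)) : IsCoprime p (X - C a) := by
  obtain ⟨q, hq⟩ := X_sub_C_dvd_sub_C_eval (p := p) (a := a)
  rw [sub_eq_iff_eq_add'] at hq
  rw [hq]
  exact (isCoprime_one_left.of_isCoprime_of_dvd_left (h.map C).dvd).add_mul_left_left q

theorem isUnit_natCast_of_ne_zero {k : Type*} [CommRing k] [Algebra ℚ k] {n : ℕ} (hn : n ≠ 0) :
    IsUnit (n : k) := by
  simpa using (IsUnit.mk0 (n : ℚ) (Nat.cast_ne_zero.2 hn)).map (algebraMap ℚ k)

namespace Module.End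

variable {R M : Type*} [CommRing R] [AddCommGroup M] [Module R M]

def torsionAwayFromOne (f : Module.End R M) : Submodule R M where
  carrier := {x | ∃ P : R[X], IsUnit (P.eval 1) ∧ aeval f P x = 0}
  zero_mem' := ⟨1, by simp, map_zero _⟩
  add_mem' := by
    rintro x y ⟨P, hP, hPx⟩ ⟨Q, hQ, hQy⟩
    refine ⟨P * Q, by simpa using hP.mul hQ, ?_⟩
    have hx : aeval f (P * Q) x = 0 := by rw [mul_comm, map_mul, mul_apply, hPx, map_zero]
    have hy : aeval f (P * Q) y = 0 := by rw [map_mul, mul_apply, hQy, map_zero]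
    rw [map_add, hx, hy, add_zero]
  smul_mem' := by
    rintro c x ⟨P, hP, hPx⟩
    exact ⟨P, hP, by rw [map_smul, hPx, smul_zero]⟩

theorem disjoint_torsionAwayFromOne_ker (f : Module.End R M) :
    Disjoint f.torsionAwayFromOne (LinearMap.ker ((1 - f) ^ 2)) := by
  rw [Submodule.disjoint_def]
  rintro x ⟨P, hP, hPx⟩ hx
  have hcop : IsCoprime P ((X - C 1) ^ 2) := (isCoprime_X_sub_C_of_isUnit_eval_s15 hP).pow_right
  refine Submodule.disjoint_def.1 (disjoint_ker_aeval_of_isCoprime f hcop) x hPx ?_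
  rwa [LinearMap.mem_ker, map_pow, map_sub, aeval_X, aeval_C, map_one, ← neg_sub, neg_sq]

theorem one_sub_sq_apply_mem_torsionAwayFromOne_of_apply_eq_zero {f : Module.End R M} {x : M}
    (hx : f x = 0) : ((1 - f) ^ 2 : Module.End R M) x ∈ f.torsionAwayFromOne := by
  have hcomm : Commute f ((1 - f) ^ 2) :=
    ((Commute.one_right f).sub_right (Commute.refl f)).pow_right 2
  refine ⟨X, by simp, ?_⟩
  rw [aeval_X, ← mul_apply, hcomm.eq, mul_apply, hx, map_zero]

theorem one_sub_sq_apply_mem_torsionAwayFromOne {f : Module.End R M} {n : ℕ}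
    (hn : IsUnit (n : R)) (hn' : IsUnit ((n + 1 : ℕ) : R)) {x : M}
    (hx : ((f ^ n - 1) * (f ^ (n + 1) - 1)) x = 0) :
    ((1 - f) ^ 2 : Module.End R M) x ∈ f.torsionAwayFromOne := by
  set P : R[X] := (∑ i ∈ Finset.range n, X ^ i) * ∑ i ∈ Finset.range (n + 1), X ^ i
  have hP : P * (1 - X) ^ 2 = (X ^ n - 1) * (X ^ (n + 1) - 1) := by
    rw [sq, mul_mul_mul_comm, geom_sum_mul_neg, geom_sum_mul_neg]
    ring
  refine ⟨P, by simpa [P, eval_finsetSum] using hn.mul hn', ?_⟩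
  rw [← mul_apply, ← hx]
  simpa using congrArg (fun Q => aeval f Q x) hP

theorem range_one_sub_sq_le_torsionAwayFromOne {f : Module.End R M} {G : ℕ → Submodule R M}
    (hG : ⨆ n, G n = ⊤) (hunit : ∀ n : ℕ, IsUnit ((n + 1 : ℕ) : R)) (h0 : ∀ x ∈ G 0, f x = 0)
    (hpoly : ∀ n, ∀ x ∈ G n, ((f ^ n - 1) * (f ^ (n + 1) - 1)) x = 0) :
    LinearMap.range ((1 - f) ^ 2) ≤ f.torsionAwayFromOne := by
  rw [LinearMap.range_eq_map, ← hG, Submodule.map_iSup, iSup_le_iff]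
  rintro (_ | n) _ ⟨x, hx, rfl⟩
  · exact one_sub_sq_apply_mem_torsionAwayFromOne_of_apply_eq_zero (h0 x hx)
  · exact one_sub_sq_apply_mem_torsionAwayFromOne (hunit n) (hunit (n + 1)) (hpoly _ x hx)

section Projection

variable {S p : Module.End R M} (hdisj : Disjoint (LinearMap.range S) (LinearMap.ker S))
  (hpS : ∀ x, p x ∈ LinearMap.range S) (hpK : ∀ x, x - p x ∈ LinearMap.ker S)
include hdisj hpS hpK

theorem apply_eq_self_of_mem_range {x : M} (hx : x ∈ LinearMap.range S) : p x = x := by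
  have h := Submodule.disjoint_def.1 hdisj _ (sub_mem hx (hpS x)) (hpK x)
  exact (sub_eq_zero.1 h).symm

theorem apply_eq_zero_of_mem_ker {x : M} (hx : x ∈ LinearMap.ker S) : p x = 0 := by
  refine Submodule.disjoint_def.1 hdisj _ (hpS x) ?_
  have h := hpK x
  rw [LinearMap.mem_ker, map_sub, LinearMap.mem_ker.1 hx, zero_sub, neg_eq_zero] at h
  exact h

end Projection

theorem exists_one_sub_apply_eq_one_sub_sq_apply {f : Module.End R M} {V : Submodule R M}
    (hfV : ∀ x ∈ V, f x ∈ V) {N : ℕ} (hN : IsUnit (N : R)) (hfN : ∀ y ∈ V, (f ^ N) y = y)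
    {y : M} (hy : y ∈ V) : ∃ v ∈ V, (1 - f) y = ((1 - f) ^ 2 : Module.End R M) v := by
  obtain ⟨c, hc⟩ := hN.exists_left_inv
  set g : Module.End R M := ∑ j ∈ Finset.range N, ∑ i ∈ Finset.range j, f ^ i
  have hg : (1 - f) * g = N - ∑ j ∈ Finset.range N, f ^ j := by
    rw [Finset.mul_sum]
    simp only [mul_neg_geom_sum, Finset.sum_sub_distrib, Finset.sum_const, Finset.card_range,
      nsmul_one]
  have hg2 : (1 - f) ^ 2 * g = (N : Module.End R M) * (1 - f) - (1 - f ^ N) := by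
    rw [pow_two, mul_assoc, hg, mul_sub, mul_neg_geom_sum, (Nat.cast_commute N (1 - f)).eq]
  refine ⟨c • g y, ?_, ?_⟩
  · refine V.smul_mem c ?_
    simp only [g, LinearMap.sum_apply]
    exact sum_mem fun j _ => sum_mem fun i _ => pow_apply_mem_of_forall_mem i hfV y hy
  · have hfix : (1 - f ^ N) y = 0 := by
      rw [LinearMap.sub_apply, one_apply, hfN y hy, sub_self]
    calc (1 - f) y = c • ((N : Module.End R M) * (1 - f)) y := by
          rw [mul_apply, natCast_apply, ← Nat.cast_smul_eq_nsmul R, smul_smul, hc, one_smul]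
      _ = c • ((1 - f) ^ 2 * g : Module.End R M) y := by
          rw [hg2, LinearMap.sub_apply, hfix, sub_zero]
      _ = ((1 - f) ^ 2 : Module.End R M) (c • g y) := by rw [map_smul, mul_apply]

theorem map_eq_map_one_sub_of_pow_apply_eq_self {f p : Module.End R M}
    (hdisj : Disjoint (LinearMap.range ((1 - f) ^ 2)) (LinearMap.ker ((1 - f) ^ 2)))
    (hpS : ∀ x, p x ∈ LinearMap.range ((1 - f) ^ 2))
    (hpK : ∀ x, x - p x ∈ LinearMap.ker ((1 - f) ^ 2))
    {V : Submodule R M} (hfV : ∀ x ∈ V, f x ∈ V) {N : ℕ} (hN : IsUnit (N : R))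
    (hfN : ∀ y ∈ V, (f ^ N) y = y) : V.map p = V.map (1 - f) := by
  apply le_antisymm
  · rintro _ ⟨y, hy, rfl⟩
    obtain ⟨v, hv, hyv⟩ := exists_one_sub_apply_eq_one_sub_sq_apply hfV hN hfN hy
    obtain ⟨w, -, hvw⟩ := exists_one_sub_apply_eq_one_sub_sq_apply hfV hN hfN hv
    have hker : p (y - (1 - f) v) = 0 := by
      refine apply_eq_zero_of_mem_ker hdisj hpS hpK ?_
      rw [LinearMap.mem_ker, pow_two, mul_apply, map_sub, hyv, pow_two, mul_apply, sub_self,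
        map_zero]
    rw [map_sub, sub_eq_zero] at hker
    exact ⟨v, hv, by rw [hker, apply_eq_self_of_mem_range hdisj hpS hpK ⟨w, hvw.symm⟩]⟩
  · rintro _ ⟨y, hy, rfl⟩
    obtain ⟨v, -, hyv⟩ := exists_one_sub_apply_eq_one_sub_sq_apply hfV hN hfN hy
    exact ⟨(1 - f) y, sub_mem hy (hfV y hy),
      apply_eq_self_of_mem_range hdisj hpS hpK ⟨v, hyv.symm⟩⟩

end Module.End

section ExactWords

variable {k A Ω : Type*} [CommRing k] [Ring A] [Algebra k A] [Ring Ω] [Algebra k Ω]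

structure IsDGGrading (ι : A →ₐ[k] Ω) (d : Ω →ₗ[k] Ω) (G : ℕ → Submodule k Ω) : Prop where
  algHom_mem : ∀ a, ι a ∈ G 0
  mul_mem : ∀ {m n x y}, x ∈ G m → y ∈ G n → x * y ∈ G (m + n)
  d_mem : ∀ {n x}, x ∈ G n → d x ∈ G (n + 1)
  d_d : ∀ x, d (d x) = 0
  d_mul : ∀ {m x}, x ∈ G m → ∀ y, d (x * y) = d x * y + ((-1 : ℤ) ^ m) • (x * d y)

def dWord (ι : A →ₐ[k] Ω) (d : Ω →ₗ[k] Ω) (L : List A) : Ω := (L.map fun a => d (ι a)).prod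

/-- `d Ωⁿ`: note the shift, its generating words have length `n + 1`. -/
def exactWords (ι : A →ₐ[k] Ω) (d : Ω →ₗ[k] Ω) (n : ℕ) : Submodule k Ω :=
  Submodule.span k {w | ∃ L : List A, L.length = n + 1 ∧ dWord ι d L = w}

variable {ι : A →ₐ[k] Ω} {d : Ω →ₗ[k] Ω} {G : ℕ → Submodule k Ω}

@[simp]
theorem dWord_nil : dWord ι d [] = 1 := rfl

@[simp]
theorem dWord_cons (a : A) (L : List A) : dWord ι d (a :: L) = d (ι a) * dWord ι d L := by
  simp [dWord]

theorem dWord_append (L M : List A) : dWord ι d (L ++ M) = dWord ι d L * dWord ι d M := by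
  simp [dWord]

theorem ofFn_prod_eq_dWord {n : ℕ} (a : Fin n → A) :
    (List.ofFn fun i => d (ι (a i))).prod = dWord ι d (List.ofFn a) := by
  simp [dWord, List.map_ofFn, Function.comp_def]

namespace IsDGGrading

theorem dWord_mem (hΩ : IsDGGrading ι d G) (L : List A) : dWord ι d L ∈ G L.length := by
  induction L with
  | nil => simpa using hΩ.algHom_mem 1
  | cons a L ih => simpa [add_comm] using hΩ.mul_mem (hΩ.d_mem (hΩ.algHom_mem a)) ih

theorem d_dWord (hΩ : IsDGGrading ι d G) (L : List A) : d (dWord ι d L) = 0 := by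
  induction L with
  | nil =>
    have h := hΩ.d_mul (m := 0) (by simpa using hΩ.algHom_mem 1) (1 : Ω)
    simp only [mul_one, pow_zero, one_smul, one_mul, left_eq_add] at h
    exact h
  | cons a L ih => simp [hΩ.d_mul (hΩ.d_mem (hΩ.algHom_mem a)), hΩ.d_d, ih]

theorem d_mul_dWord (hΩ : IsDGGrading ι d G) (a : A) (L : List A) :
    d (ι a * dWord ι d L) = dWord ι d (a :: L) := by
  simp [hΩ.d_mul (hΩ.algHom_mem a), hΩ.d_dWord]

theorem exactWords_le_range_d (hΩ : IsDGGrading ι d G) (n : ℕ) :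
    exactWords ι d n ≤ LinearMap.range d := by
  rw [exactWords, Submodule.span_le]
  rintro _ ⟨_ | ⟨a, L⟩, hL, rfl⟩
  · simp at hL
  · exact ⟨ι a * dWord ι d L, hΩ.d_mul_dWord a L⟩

theorem map_d_eq_exactWords (hΩ : IsDGGrading ι d G)
    (hspan : ∀ n : ℕ, G n = Submodule.span k {w : Ω | ∃ a : ℕ → A,
      w = ι (a 0) * (List.ofFn fun i : Fin n => d (ι (a (i.1 + 1)))).prod}) (n : ℕ) :
    (G n).map d = exactWords ι d n := by
  apply le_antisymm
  · rw [hspan n, Submodule.map_span_le]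
    rintro _ ⟨a, rfl⟩
    rw [ofFn_prod_eq_dWord, hΩ.d_mul_dWord]
    exact Submodule.subset_span ⟨_, by simp, rfl⟩
  · rw [exactWords, Submodule.span_le]
    rintro _ ⟨_ | ⟨a, L⟩, hL, rfl⟩
    · simp at hL
    · refine ⟨ι a * dWord ι d L, ?_, hΩ.d_mul_dWord a L⟩
      simpa [Nat.succ_inj.1 hL] using hΩ.mul_mem (hΩ.algHom_mem a) (hΩ.dWord_mem L)

theorem range_d_eq_iSup_exactWords (hΩ : IsDGGrading ι d G)
    (hspan : ∀ n : ℕ, G n = Submodule.span k {w : Ω | ∃ a : ℕ → A,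
      w = ι (a 0) * (List.ofFn fun i : Fin n => d (ι (a (i.1 + 1)))).prod})
    (hsup : ⨆ n, G n = ⊤) :
    LinearMap.range d = ⨆ n, exactWords ι d n := by
  rw [LinearMap.range_eq_map, ← hsup, Submodule.map_iSup]
  exact iSup_congr (hΩ.map_d_eq_exactWords hspan)

end IsDGGrading

section Karoubi

variable {κ : Module.End k Ω} (hΩ : IsDGGrading ι d G)
  (hκ : ∀ (n : ℕ) (x : Ω), x ∈ G n → ∀ a : A, κ (x * d (ι a)) = ((-1 : ℤ) ^ n) • (d (ι a) * x))
include hΩ hκ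

theorem karoubi_dWord_concat (M : List A) (b : A) :
    κ (dWord ι d (M ++ [b])) = ((-1 : ℤ) ^ M.length) • dWord ι d (b :: M) := by
  simpa [dWord_append] using hκ _ _ (hΩ.dWord_mem M) b

theorem karoubi_pow_dWord_append (P S : List A) :
    (κ ^ S.length) (dWord ι d (P ++ S)) =
      ((-1 : ℤ) ^ (P.length * S.length)) • dWord ι d (S ++ P) := by
  induction S using List.reverseRecOn generalizing P with
  | nil => simp
  | append_singleton S b ih =>
    have hsign : (-1 : ℤ) ^ (P.length + S.length) * (-1) ^ ((P.length + 1) * S.length) =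
        (-1) ^ (P.length * (S.length + 1)) := by
      rw [← pow_add, show P.length + S.length + (P.length + 1) * S.length =
        P.length * (S.length + 1) + 2 * S.length by ring, pow_add,
        (even_two_mul _).neg_one_pow, mul_one]
    rw [List.length_append, List.length_singleton, pow_succ, Module.End.mul_apply,
      ← List.append_assoc, karoubi_dWord_concat hΩ hκ, map_zsmul, ← List.cons_append, ih,
      smul_smul, List.length_cons, List.length_append, hsign]
    simp

theorem karoubi_pow_length_dWord (L : List A) : (κ ^ L.length) (dWord ι d L) = dWord ι d L := by
  simpa using karoubi_pow_dWord_append hΩ hκ [] L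

theorem dWord_mul_sub_eq_one_sub_karoubi_pow (X Y : List A) :
    dWord ι d X * dWord ι d Y - ((-1 : ℤ) ^ (X.length * Y.length)) • (dWord ι d Y * dWord ι d X) =
      (1 - κ ^ Y.length) (dWord ι d (X ++ Y)) := by
  rw [LinearMap.sub_apply, Module.End.one_apply, karoubi_pow_dWord_append hΩ hκ, dWord_append,
    dWord_append]

theorem karoubi_mem_exactWords (n : ℕ) : ∀ x ∈ exactWords ι d n, κ x ∈ exactWords ι d n := by
  suffices exactWords ι d n ≤ (exactWords ι d n).comap κ from fun x hx => this hx
  rw [exactWords, Submodule.span_le]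
  rintro _ ⟨L, hL, rfl⟩
  obtain ⟨M, b, rfl⟩ := (List.eq_nil_or_concat' L).resolve_left (by rintro rfl; simp at hL)
  rw [SetLike.mem_coe, Submodule.mem_comap, karoubi_dWord_concat hΩ hκ]
  refine zsmul_mem (Submodule.subset_span ?_) _
  exact ⟨b :: M, by simpa using hL, rfl⟩

theorem karoubi_pow_apply_of_mem_exactWords (n : ℕ) :
    ∀ x ∈ exactWords ι d n, (κ ^ (n + 1)) x = x := by
  intro x hx
  refine LinearMap.eqOn_span (f := κ ^ (n + 1)) (g := LinearMap.id) ?_ hx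
  rintro _ ⟨L, hL, rfl⟩
  simpa [← hL] using karoubi_pow_length_dWord hΩ hκ L

theorem dWord_gradedComm_mem_map_range (a : A) (X Y : List A) :
    dWord ι d (a :: X) * dWord ι d Y -
        ((-1 : ℤ) ^ ((a :: X).length * Y.length)) • (dWord ι d Y * dWord ι d (a :: X)) ∈
      (LinearMap.range d).map (1 - κ) := by
  rw [dWord_mul_sub_eq_one_sub_karoubi_pow hΩ hκ, ← mul_neg_geom_sum, Module.End.mul_apply]
  refine Submodule.mem_map_of_mem (hΩ.exactWords_le_range_d (X ++ Y).length ?_)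
  rw [LinearMap.sum_apply]
  exact Submodule.sum_mem _ fun i _ => Module.End.pow_apply_mem_of_forall_mem i
    (karoubi_mem_exactWords hΩ hκ _) _ (Submodule.subset_span ⟨_, by simp, rfl⟩)

theorem d_gradedComm_mem_map_range
    (hspan : ∀ n : ℕ, G n = Submodule.span k {w : Ω | ∃ a : ℕ → A,
      w = ι (a 0) * (List.ofFn fun i : Fin n => d (ι (a (i.1 + 1)))).prod})
    {p q : ℕ} {x y : Ω} (hx : x ∈ G p) (hy : y ∈ G q) :
    d x * d y - ((-1 : ℤ) ^ ((p + 1) * (q + 1))) • (d y * d x) ∈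
      (LinearMap.range d).map (1 - κ) := by
  let B : Ω →ₗ[k] Ω →ₗ[k] Ω := (LinearMap.mul k Ω).compl₁₂ d d -
    ((-1 : ℤ) ^ ((p + 1) * (q + 1))) • (LinearMap.mul k Ω).flip.compl₁₂ d d
  suffices Submodule.map₂ B (G p) (G q) ≤ (LinearMap.range d).map (1 - κ) from
    this (Submodule.apply_mem_map₂ B hx hy)
  rw [hspan p, hspan q, Submodule.map₂_span_span, Submodule.span_le]
  rintro _ ⟨_, ⟨a, rfl⟩, _, ⟨b, rfl⟩, rfl⟩
  simp only [B, ofFn_prod_eq_dWord, LinearMap.sub_apply, LinearMap.smul_apply,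
    LinearMap.compl₁₂_apply, LinearMap.mul_apply', LinearMap.flip_apply, hΩ.d_mul_dWord]
  simpa using dWord_gradedComm_mem_map_range hΩ hκ (a 0)
    (List.ofFn fun i : Fin p => a (i.1 + 1)) (b 0 :: List.ofFn fun i : Fin q => b (i.1 + 1))

theorem map_one_sub_karoubi_exactWords_le (n : ℕ) :
    (exactWords ι d n).map (1 - κ) ≤ Submodule.span k {c : Ω | ∃ (p q : ℕ) (x y : Ω),
      x ∈ G p ∧ y ∈ G q ∧ c = d x * d y - ((-1 : ℤ) ^ ((p + 1) * (q + 1))) • (d y * d x)} := by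
  rw [exactWords, Submodule.map_span_le]
  rintro _ ⟨L, hL, rfl⟩
  obtain ⟨M, b, rfl⟩ := (List.eq_nil_or_concat' L).resolve_left (by rintro rfl; simp at hL)
  rw [LinearMap.sub_apply, Module.End.one_apply, karoubi_dWord_concat hΩ hκ]
  rcases M with _ | ⟨a, M⟩
  · simp
  · refine Submodule.subset_span ⟨M.length, 0, ι a * dWord ι d M, ι b,
      by simpa using hΩ.mul_mem (hΩ.algHom_mem a) (hΩ.dWord_mem M), hΩ.algHom_mem b, ?_⟩
    simp [hΩ.d_mul_dWord, dWord_append, mul_assoc]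

end Karoubi

end ExactWords

theorem stmt_15_general {k A Ω : Type} [CommRing k] [Algebra ℚ k]
    [Ring A] [Algebra k A] [Ring Ω] [Algebra k Ω]
    (ι : A →ₐ[k] Ω) (d : Ω →ₗ[k] Ω) (G : ℕ → Submodule k Ω)
    (hG0 : G 0 = LinearMap.range ι.toLinearMap)
    (hGmul : ∀ m n : ℕ, ∀ x ∈ G m, ∀ y ∈ G n, x * y ∈ G (m + n))
    (hdG : ∀ n : ℕ, ∀ x ∈ G n, d x ∈ G (n + 1))
    (hdd : ∀ x : Ω, d (d x) = 0)
    (hleib : ∀ (m : ℕ) (x : Ω), x ∈ G m → ∀ y : Ω,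
      d (x * y) = d x * y + ((-1 : ℤ) ^ m) • (x * d y))
    (hspan : ∀ n : ℕ, G n = Submodule.span k
      {w : Ω | ∃ a : ℕ → A,
        w = ι (a 0) * (List.ofFn fun i : Fin n => d (ι (a (i.1 + 1)))).prod})
    (hsup : (⨆ n, G n) = ⊤)
    (κ : Module.End k Ω)
    (hκ : ∀ (n : ℕ) (x : Ω), x ∈ G n → ∀ a : A,
      κ (x * d (ι a)) = ((-1 : ℤ) ^ n) • (d (ι a) * x))
    (hκ0 : ∀ a : A, κ (ι a) = 0)
    (hκpoly : ∀ n : ℕ, ∀ x ∈ G n, ((κ ^ n - 1) * (κ ^ (n + 1) - 1)) x = 0)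
    (Pperp : Module.End k Ω)
    (hPr : ∀ x : Ω, Pperp x ∈ LinearMap.range (((1 : Module.End k Ω) - κ) ^ 2))
    (hPk : ∀ x : Ω, x - Pperp x ∈ LinearMap.ker (((1 : Module.End k Ω) - κ) ^ 2)) :
    Submodule.map (Pperp : Ω →ₗ[k] Ω) (LinearMap.range d)
        = Submodule.map (((1 : Module.End k Ω) - κ) : Ω →ₗ[k] Ω) (LinearMap.range d) ∧
    Submodule.map (((1 : Module.End k Ω) - κ) : Ω →ₗ[k] Ω) (LinearMap.range d)
        = Submodule.span k {c : Ω | ∃ (p q : ℕ) (x y : Ω), x ∈ G p ∧ y ∈ G q ∧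
            c = d x * d y - ((-1 : ℤ) ^ ((p + 1) * (q + 1))) • (d y * d x)} := by
  have hΩ : IsDGGrading ι d G :=
    { algHom_mem := fun a => hG0 ▸ ⟨a, rfl⟩
      mul_mem := fun hx hy => hGmul _ _ _ hx _ hy
      d_mem := fun hx => hdG _ _ hx
      d_d := hdd
      d_mul := fun hx => hleib _ _ hx }
  have hunit (n : ℕ) : IsUnit ((n + 1 : ℕ) : k) := isUnit_natCast_of_ne_zero n.succ_ne_zero
  have hκG0 : ∀ x ∈ G 0, κ x = 0 := by
    rw [hG0]
    rintro _ ⟨a, rfl⟩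
    exact hκ0 a
  have hdisj := κ.disjoint_torsionAwayFromOne_ker.mono_left
    (Module.End.range_one_sub_sq_le_torsionAwayFromOne hsup hunit hκG0 hκpoly)
  have hrange := hΩ.range_d_eq_iSup_exactWords hspan hsup
  refine ⟨?_, le_antisymm ?_ ?_⟩
  · rw [hrange, Submodule.map_iSup, Submodule.map_iSup]
    exact iSup_congr fun n => Module.End.map_eq_map_one_sub_of_pow_apply_eq_self hdisj hPr hPk
      (karoubi_mem_exactWords hΩ hκ n) (hunit n) (karoubi_pow_apply_of_mem_exactWords hΩ hκ n)
  · rw [hrange, Submodule.map_iSup]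
    exact iSup_le (map_one_sub_karoubi_exactWords_le hΩ hκ)
  · rw [Submodule.span_le]
    rintro _ ⟨p, q, x, y, hx, hy, rfl⟩
    exact d_gradedComm_mem_map_range hΩ hκ hspan hx hy

/-- with the Cuntz–Quillen harmonic decomposition on `Ω̄A`, one has
`P⊥ dΩ̄ = (Id−κ) dΩ̄ = [dΩ, dΩ]‾`: the antiharmonic part of the space of exact
noncommutative forms coincides with the span of graded commutators of exact forms. -/
theorem stmt_15 {k A Ω : Type} [CommRing k] [Algebra ℚ k]
    [Ring A] [Algebra k A] [Ring Ω] [Algebra k Ω]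
    (ι : A →ₐ[k] Ω) (d : Ω →ₗ[k] Ω) (G : ℕ → Submodule k Ω)
    (hsplit : ∃ p : A →ₗ[k] k, ∀ c : k, p (algebraMap k A c) = c)
    (hG0 : G 0 = LinearMap.range ι.toLinearMap)
    (hGmul : ∀ m n : ℕ, ∀ x ∈ G m, ∀ y ∈ G n, x * y ∈ G (m + n))
    (hdG : ∀ n : ℕ, ∀ x ∈ G n, d x ∈ G (n + 1))
    (hdd : ∀ x : Ω, d (d x) = 0)
    (hleib : ∀ (m : ℕ) (x : Ω), x ∈ G m → ∀ y : Ω,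
      d (x * y) = d x * y + ((-1 : ℤ) ^ m) • (x * d y))
    (hspan : ∀ n : ℕ, G n = Submodule.span k
      {w : Ω | ∃ a : ℕ → A,
        w = ι (a 0) * (List.ofFn fun i : Fin n => d (ι (a (i.1 + 1)))).prod})
    (hsup : (⨆ n, G n) = ⊤)
    (κ : Module.End k Ω)
    (hκ : ∀ (n : ℕ) (x : Ω), x ∈ G n → ∀ a : A,
      κ (x * d (ι a)) = ((-1 : ℤ) ^ n) • (d (ι a) * x))
    (hκ0 : ∀ a : A, κ (ι a) = 0)
    (hκG : ∀ n : ℕ, ∀ x ∈ G n, κ x ∈ G n)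
    (hκpoly : ∀ n : ℕ, ∀ x ∈ G n, ((κ ^ n - 1) * (κ ^ (n + 1) - 1)) x = 0)
    (Pperp : Module.End k Ω)
    (hPr : ∀ x : Ω, Pperp x ∈ LinearMap.range (((1 : Module.End k Ω) - κ) ^ 2))
    (hPk : ∀ x : Ω, x - Pperp x ∈ LinearMap.ker (((1 : Module.End k Ω) - κ) ^ 2))
    (hPP : ∀ x : Ω, Pperp (Pperp x) = Pperp x)
    (hPG : ∀ n : ℕ, ∀ x ∈ G n, Pperp x ∈ G n) :
    Submodule.map (Pperp : Ω →ₗ[k] Ω) (LinearMap.range d)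
        = Submodule.map (((1 : Module.End k Ω) - κ) : Ω →ₗ[k] Ω) (LinearMap.range d) ∧
    Submodule.map (((1 : Module.End k Ω) - κ) : Ω →ₗ[k] Ω) (LinearMap.range d)
        = Submodule.span k {c : Ω | ∃ (p q : ℕ) (x y : Ω), x ∈ G p ∧ y ∈ G q ∧
            c = d x * d y - ((-1 : ℤ) ^ ((p + 1) * (q + 1))) • (d y * d x)} :=
  stmt_15_general ι d G hG0 hGmul hdG hdd hleib hspan hsup κ hκ hκ0 hκpoly Pperp hPr hPk
end

section
/- Let A be a unital algebra over a commutative ℚ-algebra k with k → A split, let Ω_t = ΩA ∗_k k[t] be the extended forms algebra, DR_t = Ω_t/[Ω_t,Ω_t], and i_t the super-derivation of Ω_t with i_t(t) = 0, i_t(a) = 0 for a ∈ A, and i_t(da) = [a,t] = at − ta. Then i_t² = 0 on Ω_t, and i_t descends to a map on DR_t that anti-commutes with the de Rham differential d (which kills t): d∘i_t + i_t∘d = 0 on DR_t. -/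
/-!
Let `paritySpan r` be the span of the words in the letters `t`, `a`, `da` with a number of
letters `da` congruent to `r` mod 2. Both `d` and `i_t` are odd super-derivations for this
parity, so `i_t²` and `d i_t + i_t d` are ordinary derivations. They agree with `0` and with
`[·, t]` on the letters, hence everywhere: `i_t² = 0` and `d i_t + i_t d = [·, t]`, a
supercommutator with the even element `t`.

For `y ∈ G m`, `z ∈ G n` the Leibniz rule gives `i_t [y, z] = [i_t y, z] ± [y, i_t z]`. The
`G n` are not assumed independent, so `y` only splits as `e + o` with `e` of parity `m` and an
off-parity part `o`. Expanding `D (y r)` by the Leibniz rules of `y`, `e` and `o` gives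
`2 o · D r = 0` for `D = d, i_t`. Hence `o · x · d r = 0 = o · i_t r` for all `x`, `r`, and
`i_t o` annihilates all odd elements, which kills the terms of the wrong sign.
-/

namespace ExtendedForms

variable {k Ω : Type} [CommRing k] [Ring Ω] [Algebra k Ω]

def IsSuperDerivation (G : ℕ → Submodule k Ω) (D : Ω →ₗ[k] Ω) : Prop :=
  ∀ (m : ℕ) (x : Ω), x ∈ G m → ∀ y : Ω,
    D (x * y) = D x * y + ((-1 : ℤ) ^ m) • (x * D y)

def superCommSpan (G : ℕ → Submodule k Ω) : Submodule k Ω :=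
  Submodule.span k {c : Ω | ∃ (m n : ℕ) (y z : Ω),
    y ∈ G m ∧ z ∈ G n ∧ c = y * z - ((-1 : ℤ) ^ (m * n)) • (z * y)}

theorem neg_one_pow_eq_of_modEq {q r : ℕ} (h : q ≡ r [MOD 2]) : (-1 : ℤ) ^ q = (-1) ^ r := by
  rw [neg_one_pow_eq_pow_mod_two, h, ← neg_one_pow_eq_pow_mod_two]

theorem neg_one_pow_smul_smul {M : Type*} [AddCommGroup M] (r : ℕ) (v : M) :
    ((-1 : ℤ) ^ r) • ((-1 : ℤ) ^ r) • v = v := by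
  rw [smul_smul, ← mul_pow, neg_one_mul, neg_neg, one_pow, one_smul]

theorem supercomm_mem_superCommSpan {G : ℕ → Submodule k Ω} {r s : ℕ} {e f : Ω}
    (he : e ∈ Submodule.span k {y | ∃ q, q ≡ r [MOD 2] ∧ y ∈ G q})
    (hf : f ∈ Submodule.span k {z | ∃ q, q ≡ s [MOD 2] ∧ z ∈ G q}) :
    e * f - ((-1 : ℤ) ^ (r * s)) • (f * e) ∈ superCommSpan G := by
  let B : Ω →ₗ[k] Ω →ₗ[k] Ω :=
    LinearMap.mul k Ω - ((-1 : ℤ) ^ (r * s)) • (LinearMap.mul k Ω).flip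
  have hmem := Submodule.apply_mem_map₂ B he hf
  rw [Submodule.map₂_span_span] at hmem
  refine Submodule.span_le.2 ?_ hmem
  rintro _ ⟨y, ⟨q, hq, hy⟩, z, ⟨q', hq', hz⟩, rfl⟩
  refine Submodule.subset_span ⟨q, q', y, z, hy, hz, ?_⟩
  rw [neg_one_pow_eq_of_modEq (hq.mul hq')]
  rfl

theorem eq_zero_of_two_zsmul (k : Type*) [CommRing k] [Algebra ℚ k] {M : Type*} [AddCommGroup M]
    [Module k M] {v : M} (h : (2 : ℤ) • v = 0) : v = 0 := by
  have h2 : IsUnit (2 : k) := by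
    simpa only [map_ofNat] using (Ne.isUnit (two_ne_zero : (2 : ℚ) ≠ 0)).map (algebraMap ℚ k)
  rw [two_smul, ← two_smul k] at h
  exact h2.smul_eq_zero.1 h

end ExtendedForms

structure ExtendedForms (k A Ω : Type) [CommRing k] [Ring A] [Algebra k A]
    [Ring Ω] [Algebra k Ω] where
  ι : A →ₐ[k] Ω
  T : Ω
  d : Ω →ₗ[k] Ω
  G : ℕ → Submodule k Ω
  it : Ω →ₗ[k] Ω
  ι_mem_G : ∀ a : A, ι a ∈ G 0
  T_mem_G : T ∈ G 0
  mul_mem_G : ∀ m n : ℕ, ∀ x ∈ G m, ∀ y ∈ G n, x * y ∈ G (m + n)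
  d_mem_G : ∀ n : ℕ, ∀ x ∈ G n, d x ∈ G (n + 1)
  d_d : ∀ x : Ω, d (d x) = 0
  d_T : d T = 0
  isSuperDerivation_d : ExtendedForms.IsSuperDerivation G d
  span_words : Submodule.span k {w : Ω | ∃ L : List Ω,
    (∀ z ∈ L, z = T ∨ (∃ a : A, z = ι a) ∨ ∃ a : A, z = d (ι a)) ∧ w = L.prod} = ⊤
  it_T : it T = 0
  it_ι : ∀ a : A, it (ι a) = 0
  it_dι : ∀ a : A, it (d (ι a)) = ι a * T - T * ι a
  isSuperDerivation_it : ExtendedForms.IsSuperDerivation G it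

namespace ExtendedForms

variable {k A Ω : Type} [CommRing k] [Ring A] [Algebra k A] [Ring Ω] [Algebra k Ω]
  (S : ExtendedForms k A Ω)

inductive IsLetter : ℕ → Ω → Prop
  | T : IsLetter 0 S.T
  | ι (a : A) : IsLetter 0 (S.ι a)
  | dι (a : A) : IsLetter 1 (S.d (S.ι a))

inductive IsWord : ℕ → Ω → Prop
  | one : IsWord 0 1
  | cons {p q : ℕ} {z w : Ω} : S.IsLetter p z → IsWord q w → IsWord (p + q) (z * w)

def paritySpan (r : ℕ) : Submodule k Ω :=
  Submodule.span k {w | ∃ q, q ≡ r [MOD 2] ∧ S.IsWord q w}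

variable {S}

theorem IsLetter.mem_G {p : ℕ} {z : Ω} (h : S.IsLetter p z) : z ∈ S.G p := by
  cases h with
  | T => exact S.T_mem_G
  | ι a => exact S.ι_mem_G a
  | dι a => exact S.d_mem_G 0 _ (S.ι_mem_G a)

theorem one_mem_G : (1 : Ω) ∈ S.G 0 := map_one S.ι ▸ S.ι_mem_G 1

theorem IsWord.mem_G {q : ℕ} {w : Ω} (h : S.IsWord q w) : w ∈ S.G q := by
  induction h with
  | one => exact one_mem_G
  | cons hz _ ih => exact S.mul_mem_G _ _ _ hz.mem_G _ ih

theorem IsWord.mul {q q' : ℕ} {w w' : Ω} (h : S.IsWord q w) (h' : S.IsWord q' w') :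
    S.IsWord (q + q') (w * w') := by
  induction h with
  | one => simpa using h'
  | cons hz _ ih => simpa [mul_assoc, add_assoc] using IsWord.cons hz ih

theorem IsWord.mem_paritySpan {q : ℕ} {w : Ω} (h : S.IsWord q w) : w ∈ S.paritySpan q :=
  Submodule.subset_span ⟨q, rfl, h⟩

theorem IsLetter.mem_paritySpan {p : ℕ} {z : Ω} (h : S.IsLetter p z) : z ∈ S.paritySpan p := by
  simpa using (IsWord.cons h IsWord.one).mem_paritySpan

theorem span_isWord : Submodule.span k {w | ∃ q, S.IsWord q w} = ⊤ := by
  refine eq_top_iff.2 (S.span_words ▸ Submodule.span_mono ?_)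
  rintro _ ⟨L, hL, rfl⟩
  induction L with
  | nil => exact ⟨0, IsWord.one⟩
  | cons z L ih =>
    obtain ⟨q, hq⟩ := ih fun z' hz' => hL z' (List.mem_cons_of_mem z hz')
    rw [List.prod_cons]
    rcases hL z List.mem_cons_self with rfl | ⟨a, rfl⟩ | ⟨a, rfl⟩
    · exact ⟨_, hq.cons IsLetter.T⟩
    · exact ⟨_, hq.cons (IsLetter.ι a)⟩
    · exact ⟨_, hq.cons (IsLetter.dι a)⟩

theorem paritySpan_congr {r s : ℕ} (h : r ≡ s [MOD 2]) : S.paritySpan r = S.paritySpan s := by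
  simp only [paritySpan]
  congr 1
  ext w
  exact exists_congr fun q => and_congr_left' ⟨fun h' => h'.trans h, fun h' => h'.trans h.symm⟩

theorem paritySpan_sup_paritySpan_succ (m : ℕ) :
    S.paritySpan m ⊔ S.paritySpan (m + 1) = ⊤ := by
  rw [eq_top_iff, ← S.span_isWord, Submodule.span_le]
  rintro w ⟨q, hq⟩
  rcases Nat.mod_two_eq_zero_or_one (q + m) with h | h
  · exact Submodule.mem_sup_left (Submodule.subset_span ⟨q, by unfold Nat.ModEq; omega, hq⟩)
  · exact Submodule.mem_sup_right (Submodule.subset_span ⟨q, by unfold Nat.ModEq; omega, hq⟩)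

theorem mul_mem_paritySpan {r s : ℕ} {e f : Ω} (he : e ∈ S.paritySpan r)
    (hf : f ∈ S.paritySpan s) :
    e * f ∈ S.paritySpan (r + s) := by
  have := Submodule.mul_mem_mul he hf
  rw [paritySpan, paritySpan, Submodule.span_mul_span] at this
  refine Submodule.span_le.2 ?_ this
  rintro _ ⟨w, ⟨q, hq, hw⟩, w', ⟨q', hq', hw'⟩, rfl⟩
  exact Submodule.subset_span ⟨q + q', hq.add hq', hw.mul hw'⟩

theorem mem_span_G_of_mem_paritySpan {r : ℕ} {e : Ω} (he : e ∈ S.paritySpan r) :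
    e ∈ Submodule.span k {y | ∃ q, q ≡ r [MOD 2] ∧ y ∈ S.G q} :=
  Submodule.span_mono (by rintro _ ⟨q, hq, hw⟩; exact ⟨q, hq, hw.mem_G⟩) he

theorem IsSuperDerivation.map_mul_of_mem_paritySpan {D : Ω →ₗ[k] Ω}
    (hD : IsSuperDerivation S.G D) {r : ℕ} {e : Ω} (he : e ∈ S.paritySpan r) (x : Ω) :
    D (e * x) = D e * x + ((-1 : ℤ) ^ r) • (e * D x) := by
  induction he using Submodule.span_induction with
  | mem w hw =>
    obtain ⟨q, hq, hw⟩ := hw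
    rw [hD q w hw.mem_G x, neg_one_pow_eq_of_modEq hq]
  | zero => simp
  | add a b _ _ ha hb =>
    rw [add_mul, map_add, ha, hb, map_add]
    simp only [add_mul, smul_add]
    abel
  | smul c a _ ha =>
    rw [smul_mul_assoc, map_smul, ha, map_smul]
    simp only [smul_mul_assoc]
    module

theorem IsSuperDerivation.map_mem_paritySpan_of_isWord {D : Ω →ₗ[k] Ω}
    (hD : IsSuperDerivation S.G D) (hlet : ∀ p z, S.IsLetter p z → D z ∈ S.paritySpan (p + 1))
    {q : ℕ} {w : Ω} (hw : S.IsWord q w) :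
    D w ∈ S.paritySpan (q + 1) := by
  induction hw with
  | one => simpa using hlet 0 _ (IsLetter.ι 1)
  | @cons p q z w hz hw ih =>
    rw [hD p z hz.mem_G]
    refine add_mem ?_ (Submodule.smul_of_tower_mem _ _ ?_)
    · simpa only [Nat.add_right_comm] using mul_mem_paritySpan (hlet p z hz) hw.mem_paritySpan
    · simpa only [Nat.add_assoc] using mul_mem_paritySpan hz.mem_paritySpan ih

theorem IsSuperDerivation.map_mem_paritySpan {D : Ω →ₗ[k] Ω} (hD : IsSuperDerivation S.G D)
    (hlet : ∀ p z, S.IsLetter p z → D z ∈ S.paritySpan (p + 1)) {r : ℕ} {e : Ω}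
    (he : e ∈ S.paritySpan r) :
    D e ∈ S.paritySpan (r + 1) := by
  refine (Submodule.span_le (p := (S.paritySpan (r + 1)).comap D)).2 ?_ he
  rintro w ⟨q, hq, hw⟩
  rw [SetLike.mem_coe, Submodule.mem_comap, ← S.paritySpan_congr (hq.add_right 1)]
  exact hD.map_mem_paritySpan_of_isWord hlet hw

theorem it_mem_paritySpan {r : ℕ} {e : Ω} (he : e ∈ S.paritySpan r) :
    S.it e ∈ S.paritySpan (r + 1) := by
  refine S.isSuperDerivation_it.map_mem_paritySpan ?_ he
  rintro _ _ (_ | a | a)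
  · simp [S.it_T]
  · simp [S.it_ι]
  · rw [S.it_dι, S.paritySpan_congr (show 1 + 1 ≡ 0 + 0 [MOD 2] from rfl)]
    exact sub_mem (mul_mem_paritySpan (IsLetter.ι a).mem_paritySpan IsLetter.T.mem_paritySpan)
      (mul_mem_paritySpan IsLetter.T.mem_paritySpan (IsLetter.ι a).mem_paritySpan)

theorem d_mem_paritySpan {r : ℕ} {e : Ω} (he : e ∈ S.paritySpan r) :
    S.d e ∈ S.paritySpan (r + 1) := by
  refine S.isSuperDerivation_d.map_mem_paritySpan ?_ he
  rintro _ _ (_ | a | a)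
  · simp [S.d_T]
  · exact (IsLetter.dι a).mem_paritySpan
  · simp [S.d_d]

theorem ext_of_leibniz {D₁ D₂ : Ω →ₗ[k] Ω}
    (h₁ : ∀ p z, S.IsLetter p z → ∀ x, D₁ (z * x) = D₁ z * x + z * D₁ x)
    (h₂ : ∀ p z, S.IsLetter p z → ∀ x, D₂ (z * x) = D₂ z * x + z * D₂ x)
    (hlet : ∀ p z, S.IsLetter p z → D₁ z = D₂ z) : D₁ = D₂ := by
  refine LinearMap.ext_on S.span_isWord ?_
  rintro w ⟨q, hw⟩
  induction hw with
  | one => simpa using hlet 0 _ (IsLetter.ι 1)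
  | cons hz _ ih => rw [h₁ _ _ hz, h₂ _ _ hz, hlet _ _ hz, ih]

theorem it_it_mul {r : ℕ} {e : Ω} (he : e ∈ S.paritySpan r) (x : Ω) :
    S.it (S.it (e * x)) = S.it (S.it e) * x + e * S.it (S.it x) := by
  have hit := S.isSuperDerivation_it
  rw [hit.map_mul_of_mem_paritySpan he, map_add,
    hit.map_mul_of_mem_paritySpan (S.it_mem_paritySpan he), map_zsmul,
    hit.map_mul_of_mem_paritySpan he, smul_add, neg_one_pow_smul_smul, pow_succ]
  module

theorem d_it_add_it_d_mul {r : ℕ} {e : Ω} (he : e ∈ S.paritySpan r) (x : Ω) :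
    S.d (S.it (e * x)) + S.it (S.d (e * x)) =
      (S.d (S.it e) + S.it (S.d e)) * x + e * (S.d (S.it x) + S.it (S.d x)) := by
  have hit := S.isSuperDerivation_it
  have hd := S.isSuperDerivation_d
  rw [hit.map_mul_of_mem_paritySpan he, hd.map_mul_of_mem_paritySpan he, map_add, map_add,
    map_zsmul, map_zsmul, hd.map_mul_of_mem_paritySpan (S.it_mem_paritySpan he),
    hit.map_mul_of_mem_paritySpan (S.d_mem_paritySpan he),
    hd.map_mul_of_mem_paritySpan he, hit.map_mul_of_mem_paritySpan he, smul_add, smul_add,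
    neg_one_pow_smul_smul, neg_one_pow_smul_smul, pow_succ]
  simp only [add_mul, mul_add]
  module

theorem it_it (x : Ω) : S.it (S.it x) = 0 := by
  have h := S.ext_of_leibniz (D₁ := S.it ∘ₗ S.it) (D₂ := 0)
    (fun _ _ hz => S.it_it_mul hz.mem_paritySpan) (by simp) ?_
  · exact LinearMap.congr_fun h x
  rintro _ _ (_ | a | a)
  · simp [S.it_T]
  · simp [S.it_ι]
  · simp [S.it_dι, S.isSuperDerivation_it 0 _ (S.ι_mem_G a),
      S.isSuperDerivation_it 0 _ S.T_mem_G, S.it_T, S.it_ι]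

theorem d_it_add_it_d (x : Ω) : S.d (S.it x) + S.it (S.d x) = x * S.T - S.T * x := by
  have h := S.ext_of_leibniz (D₁ := S.d ∘ₗ S.it + S.it ∘ₗ S.d)
    (D₂ := LinearMap.mulRight k S.T - LinearMap.mulLeft k S.T)
    (fun _ _ hz => S.d_it_add_it_d_mul hz.mem_paritySpan) (fun _ _ _ _ => by simp; noncomm_ring) ?_
  · exact LinearMap.congr_fun h x
  rintro _ _ (_ | a | a)
  · simp [S.it_T, S.d_T]
  · simp [S.it_ι, S.it_dι]
  · simp [S.it_dι, S.isSuperDerivation_d 0 _ (S.ι_mem_G a), S.isSuperDerivation_d 0 _ S.T_mem_G,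
      S.d_T, S.d_d]

theorem mul_T_sub_T_mul_mem_superCommSpan (x : Ω) : x * S.T - S.T * x ∈ superCommSpan S.G := by
  obtain ⟨e, he, o, ho, rfl⟩ := Submodule.mem_sup.1
    (S.paritySpan_sup_paritySpan_succ 0 ▸ Submodule.mem_top : x ∈ S.paritySpan 0 ⊔ _)
  have hT : S.T ∈ Submodule.span k {z | ∃ q, q ≡ 0 [MOD 2] ∧ z ∈ S.G q} :=
    Submodule.subset_span ⟨0, rfl, S.T_mem_G⟩
  have h := add_mem (supercomm_mem_superCommSpan (S.mem_span_G_of_mem_paritySpan he) hT)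
    (supercomm_mem_superCommSpan (S.mem_span_G_of_mem_paritySpan ho) hT)
  convert h using 1
  simp only [mul_zero, pow_zero, one_smul, add_mul, mul_add]
  abel

variable (S) in
def IsOffParityPart (m : ℕ) (o : Ω) : Prop :=
  ∃ y e, y ∈ S.G m ∧ e ∈ S.paritySpan m ∧ o ∈ S.paritySpan (m + 1) ∧ y = e + o

theorem exists_add_isOffParityPart {m : ℕ} {y : Ω} (hy : y ∈ S.G m) :
    ∃ e o, e ∈ S.paritySpan m ∧ S.IsOffParityPart m o ∧ y = e + o := by
  obtain ⟨e, he, o, ho, rfl⟩ := Submodule.mem_sup.1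
    (S.paritySpan_sup_paritySpan_succ m ▸ Submodule.mem_top : y ∈ S.paritySpan m ⊔ _)
  exact ⟨e, o, he, ⟨_, e, hy, he, ho, rfl⟩, rfl⟩

theorem IsOffParityPart.mem_paritySpan {m : ℕ} {o : Ω} (ho : S.IsOffParityPart m o) :
    o ∈ S.paritySpan (m + 1) := by
  obtain ⟨_, _, _, _, ho, _⟩ := ho
  exact ho

theorem IsOffParityPart.mul_isWord {m q : ℕ} {o w : Ω} (ho : S.IsOffParityPart m o)
    (hw : S.IsWord q w) : S.IsOffParityPart (m + q) (o * w) := by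
  obtain ⟨_, e, hy, he, ho, rfl⟩ := ho
  refine ⟨_, e * w, S.mul_mem_G _ _ _ hy _ hw.mem_G, mul_mem_paritySpan he hw.mem_paritySpan,
    ?_, add_mul _ _ _⟩
  simpa only [Nat.add_right_comm] using mul_mem_paritySpan ho hw.mem_paritySpan

theorem IsOffParityPart.mul_map_eq_zero [Algebra ℚ k] {D : Ω →ₗ[k] Ω}
    (hD : IsSuperDerivation S.G D) {m : ℕ} {o : Ω} (ho : S.IsOffParityPart m o) (r : Ω) :
    o * D r = 0 := by
  obtain ⟨_, e, hy, he, ho, rfl⟩ := ho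
  have h := hD m _ hy r
  rw [add_mul, map_add, hD.map_mul_of_mem_paritySpan he, hD.map_mul_of_mem_paritySpan ho, map_add,
    pow_succ] at h
  have h2 : (2 : ℤ) • ((-1 : ℤ) ^ m • (o * D r)) = 0 := by
    simp only [add_mul, smul_add] at h
    linear_combination (norm := module) -h
  rw [← neg_one_pow_smul_smul m (o * D r), eq_zero_of_two_zsmul k h2, smul_zero]

theorem IsOffParityPart.mul_mul_map_eq_zero [Algebra ℚ k] {D : Ω →ₗ[k] Ω}
    (hD : IsSuperDerivation S.G D) {m : ℕ} {o : Ω} (ho : S.IsOffParityPart m o) (x r : Ω) :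
    o * (x * D r) = 0 := by
  have h : LinearMap.mulLeft k o ∘ₗ LinearMap.mulRight k (D r) = 0 := by
    refine LinearMap.ext_on S.span_isWord ?_
    rintro w ⟨q, hw⟩
    simpa [mul_assoc] using (ho.mul_isWord hw).mul_map_eq_zero hD r
  simpa using LinearMap.congr_fun h x

theorem IsOffParityPart.it_mul_mul_d_eq_zero [Algebra ℚ k] {m : ℕ} {o : Ω}
    (ho : S.IsOffParityPart m o) (x r : Ω) : S.it o * (x * S.d r) = 0 := by
  have h := S.isSuperDerivation_it.map_mul_of_mem_paritySpan ho.mem_paritySpan (x * S.d r)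
  rwa [ho.mul_mul_map_eq_zero S.isSuperDerivation_d, map_zero,
    ho.mul_map_eq_zero S.isSuperDerivation_it, smul_zero, add_zero, eq_comm] at h

theorem mul_eq_zero_of_mem_paritySpan_of_odd {v : Ω} (hv : ∀ x r, v * (x * S.d r) = 0) {n : ℕ}
    (hn : Odd n) {e : Ω} (he : e ∈ S.paritySpan n) : v * e = 0 := by
  have hword : ∀ q w, S.IsWord q w → Odd q → ∀ x, v * (x * w) = 0 := by
    intro q w hw
    induction hw with
    | one => simp
    | @cons p q z w hz hw ih =>
      intro hodd x
      cases hz with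
      | T => simpa [mul_assoc] using ih (by simpa using hodd) (x * S.T)
      | ι a => simpa [mul_assoc] using ih (by simpa using hodd) (x * S.ι a)
      | dι a =>
        -- `da · w = d (a w) - a · dw`
        have h := S.isSuperDerivation_d 0 _ (S.ι_mem_G a) w
        rw [pow_zero, one_smul] at h
        rw [eq_sub_of_add_eq h.symm, mul_sub, mul_sub, hv, ← mul_assoc x, hv, sub_zero]
  induction he using Submodule.span_induction with
  | mem w hw =>
    obtain ⟨q, hq, hw⟩ := hw
    simpa using hword q w hw (Nat.odd_iff.2 (Eq.trans hq (Nat.odd_iff.1 hn))) 1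
  | zero => simp
  | add a b _ _ ha hb => rw [mul_add, ha, hb, add_zero]
  | smul c a _ ha => rw [mul_smul_comm, ha, smul_zero]

theorem mem_span_G_of_mem_G {m : ℕ} {y : Ω} (hy : y ∈ S.G m) :
    y ∈ Submodule.span k {z | ∃ q, q ≡ m [MOD 2] ∧ z ∈ S.G q} :=
  Submodule.subset_span ⟨m, rfl, hy⟩

theorem mul_it_mem_superCommSpan [Algebra ℚ k] {m n : ℕ} {o z : Ω}
    (ho : S.IsOffParityPart m o) (hz : z ∈ S.G n) (hn : Odd n) :
    z * S.it o ∈ superCommSpan S.G := by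
  obtain ⟨e, o', he, ho', rfl⟩ := S.exists_add_isOffParityPart hz
  have h := supercomm_mem_superCommSpan (S.mem_span_G_of_mem_paritySpan he)
    (S.mem_span_G_of_mem_paritySpan (S.it_mem_paritySpan ho.mem_paritySpan))
  rw [S.mul_eq_zero_of_mem_paritySpan_of_odd ho.it_mul_mul_d_eq_zero hn he, smul_zero, sub_zero]
    at h
  rwa [add_mul, ho'.mul_map_eq_zero S.isSuperDerivation_it, add_zero]

theorem it_mul_sub_mem_superCommSpan [Algebra ℚ k] {m n : ℕ} {y z : Ω} (hy : y ∈ S.G m)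
    (hz : z ∈ S.G n) :
    S.it y * z - ((-1 : ℤ) ^ ((m + 1) * n)) • (z * S.it y) ∈ superCommSpan S.G := by
  obtain ⟨e, o, he, ho, rfl⟩ := S.exists_add_isOffParityPart hy
  have hz' := S.mem_span_G_of_mem_G hz
  have h₁ := supercomm_mem_superCommSpan
    (S.mem_span_G_of_mem_paritySpan (S.it_mem_paritySpan he)) hz'
  have h₂ := supercomm_mem_superCommSpan
    (S.mem_span_G_of_mem_paritySpan (S.it_mem_paritySpan ho.mem_paritySpan)) hz'
  have h₃ : ((-1 : ℤ) ^ ((m + 1 + 1) * n) - (-1) ^ ((m + 1) * n)) • (z * S.it o) ∈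
      superCommSpan S.G := by
    rcases Nat.even_or_odd n with hn | hn
    · rw [(hn.mul_left _).neg_one_pow, (hn.mul_left _).neg_one_pow, sub_self, zero_smul]
      exact zero_mem _
    · exact Submodule.smul_of_tower_mem _ _ (S.mul_it_mem_superCommSpan ho hz hn)
  convert add_mem (add_mem h₁ h₂) h₃ using 1
  simp only [map_add, add_mul, mul_add]
  module

theorem it_mem_superCommSpan [Algebra ℚ k] {x : Ω} (hx : x ∈ superCommSpan S.G) :
    S.it x ∈ superCommSpan S.G := by
  induction hx using Submodule.span_induction with
  | mem c hc =>
    obtain ⟨m, n, y, z, hy, hz, rfl⟩ := hc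
    have hsign : (-1 : ℤ) ^ (m * n) * (-1) ^ ((n + 1) * m) = (-1) ^ m := by
      rw [show (n + 1) * m = m * n + m by ring, pow_add, ← mul_assoc, ← mul_pow, neg_one_mul,
        neg_neg, one_pow, one_mul]
    have h := sub_mem (S.it_mul_sub_mem_superCommSpan hy hz)
      (Submodule.smul_of_tower_mem _ ((-1 : ℤ) ^ (m * n)) (S.it_mul_sub_mem_superCommSpan hz hy))
    convert h using 1
    rw [map_sub, map_zsmul, S.isSuperDerivation_it m y hy, S.isSuperDerivation_it n z hz, smul_sub,
      smul_smul, hsign, show (m + 1) * n = m * n + n by ring, pow_add]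
    module
  | zero => simp
  | add a b _ _ ha hb => rw [map_add]; exact add_mem ha hb
  | smul c a _ ha => rw [map_smul]; exact Submodule.smul_mem _ c ha

end ExtendedForms

theorem stmt_16_general {k A Ω : Type} [CommRing k] [Algebra ℚ k]
    [Ring A] [Algebra k A] [Ring Ω] [Algebra k Ω]
    (ι : A →ₐ[k] Ω) (T : Ω) (d : Ω →ₗ[k] Ω) (G : ℕ → Submodule k Ω)
    (hι0 : ∀ a : A, ι a ∈ G 0)
    (hT0 : T ∈ G 0)
    (hGmul : ∀ m n : ℕ, ∀ x ∈ G m, ∀ y ∈ G n, x * y ∈ G (m + n))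
    (hdG : ∀ n : ℕ, ∀ x ∈ G n, d x ∈ G (n + 1))
    (hdd : ∀ x : Ω, d (d x) = 0)
    (hdT : d T = 0)
    (hleib : ∀ (m : ℕ) (x : Ω), x ∈ G m → ∀ y : Ω,
      d (x * y) = d x * y + ((-1 : ℤ) ^ m) • (x * d y))
    -- Ω_t is spanned by words in the letters T, ι(a), d(ι(a))
    (htop : Submodule.span k {w : Ω | ∃ L : List Ω,
        (∀ z ∈ L, z = T ∨ (∃ a : A, z = ι a) ∨ ∃ a : A, z = d (ι a)) ∧
        w = L.prod} = ⊤)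
    -- the contraction i_t: the super-derivation with the prescribed values on generators
    (it : Ω →ₗ[k] Ω)
    (hitT : it T = 0)
    (hitι : ∀ a : A, it (ι a) = 0)
    (hitd : ∀ a : A, it (d (ι a)) = ι a * T - T * ι a)
    (hitder : ∀ (m : ℕ) (x : Ω), x ∈ G m → ∀ y : Ω,
      it (x * y) = it x * y + ((-1 : ℤ) ^ m) • (x * it y)) :
    -- i_t² = 0 on Ω_t
    (∀ x : Ω, it (it x) = 0) ∧
    -- i_t descends to DR_t = Ω_t/[Ω_t,Ω_t]
    (∀ x ∈ Submodule.span k {c : Ω | ∃ (m n : ℕ) (y z : Ω),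
        y ∈ G m ∧ z ∈ G n ∧ c = y * z - ((-1 : ℤ) ^ (m * n)) • (z * y)},
      it x ∈ Submodule.span k {c : Ω | ∃ (m n : ℕ) (y z : Ω),
        y ∈ G m ∧ z ∈ G n ∧ c = y * z - ((-1 : ℤ) ^ (m * n)) • (z * y)}) ∧
    -- d∘i_t + i_t∘d = 0 on DR_t
    (∀ x : Ω, d (it x) + it (d x) ∈ Submodule.span k {c : Ω | ∃ (m n : ℕ) (y z : Ω),
        y ∈ G m ∧ z ∈ G n ∧ c = y * z - ((-1 : ℤ) ^ (m * n)) • (z * y)}) := by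
  let S : ExtendedForms k A Ω :=
    { ι, T, d, G, it, ι_mem_G := hι0, T_mem_G := hT0, mul_mem_G := hGmul, d_mem_G := hdG,
      d_d := hdd, d_T := hdT, isSuperDerivation_d := hleib, span_words := htop, it_T := hitT,
      it_ι := hitι, it_dι := hitd, isSuperDerivation_it := hitder }
  refine ⟨S.it_it, fun x hx => S.it_mem_superCommSpan hx, fun x => ?_⟩
  rw [S.d_it_add_it_d x]
  exact S.mul_T_sub_T_mul_mem_superCommSpan x

/-- on the extended forms algebra `Ω_t = Ω A ∗_k k[t]`, the
super-derivation `i_t` (with `i_t t = 0`, `i_t a = 0` for `a ∈ A`, and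
`i_t (da) = [a,t] = at − ta`) satisfies `i_t² = 0` on `Ω_t`, descends to the
commutator quotient `DR_t = Ω_t/[Ω_t,Ω_t]`, and anticommutes there with the
de Rham differential `d` (which kills `t`): `d∘i_t + i_t∘d = 0` on `DR_t`.
The algebra `Ω_t` is axiomatized: a graded `k`-algebra generated by `ι(A)`,
`d(ι(A))` and the degree-0 element `T`, with `d` a square-zero super-derivation. -/
theorem stmt_16 {k A Ω : Type} [CommRing k] [Algebra ℚ k]
    [Ring A] [Algebra k A] [Ring Ω] [Algebra k Ω]
    (ι : A →ₐ[k] Ω) (T : Ω) (d : Ω →ₗ[k] Ω) (G : ℕ → Submodule k Ω)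
    (hsplit : ∃ p : A →ₗ[k] k, ∀ c : k, p (algebraMap k A c) = c)
    (hι0 : ∀ a : A, ι a ∈ G 0)
    (hT0 : T ∈ G 0)
    (hGmul : ∀ m n : ℕ, ∀ x ∈ G m, ∀ y ∈ G n, x * y ∈ G (m + n))
    (hdG : ∀ n : ℕ, ∀ x ∈ G n, d x ∈ G (n + 1))
    (hdd : ∀ x : Ω, d (d x) = 0)
    (hdT : d T = 0)
    (hleib : ∀ (m : ℕ) (x : Ω), x ∈ G m → ∀ y : Ω,
      d (x * y) = d x * y + ((-1 : ℤ) ^ m) • (x * d y))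
    -- Ω_t is spanned by words in the letters T, ι(a), d(ι(a))
    (htop : Submodule.span k {w : Ω | ∃ L : List Ω,
        (∀ z ∈ L, z = T ∨ (∃ a : A, z = ι a) ∨ ∃ a : A, z = d (ι a)) ∧
        w = L.prod} = ⊤)
    (hsup : (⨆ n, G n) = ⊤)
    -- the contraction i_t: the super-derivation with the prescribed values on generators
    (it : Ω →ₗ[k] Ω)
    (hitT : it T = 0)
    (hitι : ∀ a : A, it (ι a) = 0)
    (hitd : ∀ a : A, it (d (ι a)) = ι a * T - T * ι a)
    (hitder : ∀ (m : ℕ) (x : Ω), x ∈ G m → ∀ y : Ω,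
      it (x * y) = it x * y + ((-1 : ℤ) ^ m) • (x * it y)) :
    -- i_t² = 0 on Ω_t
    (∀ x : Ω, it (it x) = 0) ∧
    -- i_t descends to DR_t = Ω_t/[Ω_t,Ω_t]
    (∀ x ∈ Submodule.span k {c : Ω | ∃ (m n : ℕ) (y z : Ω),
        y ∈ G m ∧ z ∈ G n ∧ c = y * z - ((-1 : ℤ) ^ (m * n)) • (z * y)},
      it x ∈ Submodule.span k {c : Ω | ∃ (m n : ℕ) (y z : Ω),
        y ∈ G m ∧ z ∈ G n ∧ c = y * z - ((-1 : ℤ) ^ (m * n)) • (z * y)}) ∧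
    -- d∘i_t + i_t∘d = 0 on DR_t
    (∀ x : Ω, d (it x) + it (d x) ∈ Submodule.span k {c : Ω | ∃ (m n : ℕ) (y z : Ω),
        y ∈ G m ∧ z ∈ G n ∧ c = y * z - ((-1 : ℤ) ^ (m * n)) • (z * y)}) :=
  stmt_16_general ι T d G hι0 hT0 hGmul hdG hdd hdT hleib htop it hitT hitι hitd hitder
end

section
/- Let A be an algebra, V ⊆ A a k-submodule with V·V = 0. Then for all α = a₀ da₁⋯da_m and α' = a'₀ da'₁⋯da'_n with all a_i, a'_j ∈ V, and all β ∈ Ω̄_t A, the element (dα)·t·β·t·α' + (−1)^{|α|+|β|} α·t·β·t·(dα') lies in the commutator subspace [Ω_t, Ω_t], i.e. maps to zero in DR_t A = Ω_t/[Ω_t,Ω_t]. -/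
section
variable {k A Ω : Type} [CommRing k] [Ring A] [Algebra k A] [Ring Ω] [Algebra k Ω]
variable (ι : A →ₐ[k] Ω) (d : Ω →ₗ[k] Ω) (G : ℕ → Submodule k Ω)

lemma aux_d_one
    (hι0 : ∀ a : A, ι a ∈ G 0)
    (hleib : ∀ (m : ℕ) (x : Ω), x ∈ G m → ∀ y : Ω,
      d (x * y) = d x * y + ((-1 : ℤ) ^ m) • (x * d y)) :
    d 1 = 0 := by
  have h1 : (1 : Ω) ∈ G 0 := by simpa using hι0 1
  have h := hleib 0 1 h1 1
  simp only [one_mul, mul_one, pow_zero, one_smul] at h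
  exact add_eq_left.mp h.symm

lemma aux_prod_mem
    (hGmul : ∀ m n : ℕ, ∀ x ∈ G m, ∀ y ∈ G n, x * y ∈ G (m + n))
    (hone : (1 : Ω) ∈ G 0) :
    ∀ (n : ℕ) (g : ℕ → Ω), (∀ i, g i ∈ G 1) →
      (List.ofFn fun i : Fin n => g i.1).prod ∈ G n := by
  intro n
  induction n with
  | zero => intro g hg; simpa using hone
  | succ n ih =>
      intro g hg
      rw [List.ofFn_succ]
      simp only [Fin.val_succ, Fin.val_zero, List.prod_cons]
      have h := hGmul 1 n (g 0) (hg 0) _ (ih (fun j => g (j + 1)) (fun i => hg (i + 1)))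
      rw [Nat.add_comm 1 n] at h
      exact h

lemma aux_d_prod_zero
    (hι0 : ∀ a : A, ι a ∈ G 0)
    (hleib : ∀ (m : ℕ) (x : Ω), x ∈ G m → ∀ y : Ω,
      d (x * y) = d x * y + ((-1 : ℤ) ^ m) • (x * d y)) :
    ∀ (n : ℕ) (g : ℕ → Ω), (∀ i, g i ∈ G 1) → (∀ i, d (g i) = 0) →
      d (List.ofFn fun i : Fin n => g i.1).prod = 0 := by
  intro n
  induction n with
  | zero =>
      intro g hg hdg
      simpa using aux_d_one ι d G hι0 hleib
  | succ n ih =>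
      intro g hg hdg
      rw [List.ofFn_succ]
      simp only [Fin.val_succ, Fin.val_zero, List.prod_cons]
      rw [hleib 1 (g 0) (hg 0), hdg 0,
        ih (fun j => g (j + 1)) (fun i => hg (i + 1)) (fun i => hdg (i + 1))]
      simp

lemma aux_basic (V : Submodule k A)
    (hV : ∀ v ∈ V, ∀ w ∈ V, v * w = (0 : A))
    (hι0 : ∀ a : A, ι a ∈ G 0)
    (hleib : ∀ (m : ℕ) (x : Ω), x ∈ G m → ∀ y : Ω,
      d (x * y) = d x * y + ((-1 : ℤ) ^ m) • (x * d y))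
    (u v : A) (hu : u ∈ V) (hv : v ∈ V) :
    d (ι u) * ι v = -(ι u * d (ι v)) := by
  have h0 : ι u * ι v = 0 := by
    rw [← map_mul, hV u hu v hv, map_zero]
  have h := hleib 0 (ι u) (hι0 u) (ι v)
  rw [h0, map_zero, pow_zero, one_smul] at h
  exact (neg_eq_of_add_eq_zero_left h.symm).symm ▸ rfl

lemma aux_push (V : Submodule k A)
    (hV : ∀ v ∈ V, ∀ w ∈ V, v * w = (0 : A))
    (hι0 : ∀ a : A, ι a ∈ G 0)
    (hleib : ∀ (m : ℕ) (x : Ω), x ∈ G m → ∀ y : Ω,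
      d (x * y) = d x * y + ((-1 : ℤ) ^ m) • (x * d y)) :
    ∀ (n : ℕ) (g : ℕ → A) (b : A), (∀ i, g i ∈ V) → b ∈ V →
      (d (ι (g 0)) * (List.ofFn fun i : Fin n => d (ι (g (i.1 + 1)))).prod) * ι b
        = ((-1 : ℤ) ^ (n + 1)) •
            (ι (g 0) * ((List.ofFn fun i : Fin n => d (ι (g (i.1 + 1)))).prod * d (ι b))) := by
  intro n
  induction n with
  | zero =>
      intro g b hg hb
      simp only [List.ofFn_zero, List.prod_nil, mul_one, one_mul, pow_one, zero_add]
      rw [aux_basic ι d G V hV hι0 hleib (g 0) b (hg 0) hb]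
      simp
  | succ n ih =>
      intro g b hg hb
      rw [List.ofFn_succ]
      simp only [Fin.val_succ, Fin.val_zero, List.prod_cons, Nat.zero_add]
      have hIH := ih (fun j => g (j + 1)) b (fun i => hg (i + 1)) hb
      beta_reduce at hIH
      rw [mul_assoc, mul_assoc, ← mul_assoc (d (ι (g 1))), hIH, mul_smul_comm,
        ← mul_assoc, ← mul_assoc,
        aux_basic ι d G V hV hι0 hleib (g 0) (g 1) (hg 0) (hg 1)]
      simp only [neg_mul, smul_neg, mul_assoc, pow_succ, pow_one]
      simp [neg_smul]
end


/-- let `V ⊆ A` be a `k`-submodule with `V·V = 0`.  For all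
`α = a₀ da₁⋯da_m`, `α' = a'₀ da'₁⋯da'_n` with all `a_i, a'_j ∈ V`, and all
`β ∈ Ω̄_t A` homogeneous, the element
`(dα)·t·β·t·α' + (−1)^{|α|+|β|} α·t·β·t·(dα')` lies in the commutator subspace
`[Ω_t, Ω_t]`, i.e. maps to zero in `DR_t A = Ω_t/[Ω_t,Ω_t]`. -/

theorem stmt_17 {k A Ω : Type} [CommRing k] [Algebra ℚ k]
    [Ring A] [Algebra k A] [Ring Ω] [Algebra k Ω]
    (ι : A →ₐ[k] Ω) (T : Ω) (d : Ω →ₗ[k] Ω) (G : ℕ → Submodule k Ω)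
    (hsplit : ∃ p : A →ₗ[k] k, ∀ c : k, p (algebraMap k A c) = c)
    (hι0 : ∀ a : A, ι a ∈ G 0)
    (hT0 : T ∈ G 0)
    (hGmul : ∀ m n : ℕ, ∀ x ∈ G m, ∀ y ∈ G n, x * y ∈ G (m + n))
    (hdG : ∀ n : ℕ, ∀ x ∈ G n, d x ∈ G (n + 1))
    (hdd : ∀ x : Ω, d (d x) = 0)
    (hdT : d T = 0)
    (hleib : ∀ (m : ℕ) (x : Ω), x ∈ G m → ∀ y : Ω,
      d (x * y) = d x * y + ((-1 : ℤ) ^ m) • (x * d y))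
    (htop : Submodule.span k {w : Ω | ∃ L : List Ω,
        (∀ z ∈ L, z = T ∨ (∃ a : A, z = ι a) ∨ ∃ a : A, z = d (ι a)) ∧
        w = L.prod} = ⊤)
    (hsup : (⨆ n, G n) = ⊤)
    -- the submodule V with V·V = 0
    (V : Submodule k A)
    (hV : ∀ v ∈ V, ∀ w ∈ V, v * w = (0 : A)) :
    ∀ (m n mβ : ℕ) (a a' : ℕ → A), (∀ i, a i ∈ V) → (∀ i, a' i ∈ V) →
    ∀ β ∈ G mβ,
      d (ι (a 0) * (List.ofFn fun i : Fin m => d (ι (a (i.1 + 1)))).prod) * T * β * T *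
          (ι (a' 0) * (List.ofFn fun i : Fin n => d (ι (a' (i.1 + 1)))).prod)
        + ((-1 : ℤ) ^ (m + mβ)) •
          ((ι (a 0) * (List.ofFn fun i : Fin m => d (ι (a (i.1 + 1)))).prod) * T * β * T *
            d (ι (a' 0) * (List.ofFn fun i : Fin n => d (ι (a' (i.1 + 1)))).prod))
        ∈ Submodule.span k {c : Ω | ∃ (p q : ℕ) (y z : Ω),
            y ∈ G p ∧ z ∈ G q ∧ c = y * z - ((-1 : ℤ) ^ (p * q)) • (z * y)} := by
  intro m n mβ a a' ha ha' β hβ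
  set Pm := (List.ofFn fun i : Fin m => d (ι (a (i.1 + 1)))).prod with hPmdef
  set Pn := (List.ofFn fun i : Fin n => d (ι (a' (i.1 + 1)))).prod with hPndef
  have hone : (1 : Ω) ∈ G 0 := by simpa using hι0 1
  have hPmG : Pm ∈ G m := by
    simpa [hPmdef] using aux_prod_mem G hGmul hone m (fun j => d (ι (a (j + 1))))
      (fun i => hdG 0 _ (hι0 _))
  have hPnG : Pn ∈ G n := by
    simpa [hPndef] using aux_prod_mem G hGmul hone n (fun j => d (ι (a' (j + 1))))
      (fun i => hdG 0 _ (hι0 _))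
  have hdPm : d Pm = 0 := by
    simpa [hPmdef] using aux_d_prod_zero ι d G hι0 hleib m (fun j => d (ι (a (j + 1))))
      (fun i => hdG 0 _ (hι0 _)) (fun i => hdd _)
  have hdPn : d Pn = 0 := by
    simpa [hPndef] using aux_d_prod_zero ι d G hι0 hleib n (fun j => d (ι (a' (j + 1))))
      (fun i => hdG 0 _ (hι0 _)) (fun i => hdd _)
  have hd1 : d (ι (a 0) * Pm) = d (ι (a 0)) * Pm := by
    rw [hleib 0 (ι (a 0)) (hι0 _) Pm, hdPm]; simp
  have hd2 : d (ι (a' 0) * Pn) = d (ι (a' 0)) * Pn := by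
    rw [hleib 0 (ι (a' 0)) (hι0 _) Pn, hdPn]; simp
  have hαG : ι (a 0) * Pm ∈ G m := by simpa using hGmul 0 m _ (hι0 _) _ hPmG
  have hα'G : ι (a' 0) * Pn ∈ G n := by simpa using hGmul 0 n _ (hι0 _) _ hPnG
  have hdαG : d (ι (a 0)) * Pm ∈ G (m + 1) := by
    have := hdG m _ hαG; rwa [hd1] at this
  have hdα'G : d (ι (a' 0)) * Pn ∈ G (n + 1) := by
    have := hdG n _ hα'G; rwa [hd2] at this
  have hz1G : T * β * T * (ι (a' 0) * Pn) ∈ G (mβ + n) := by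
    have h3 := hGmul _ n _ (hGmul _ 0 _ (hGmul 0 mβ T hT0 β hβ) T hT0) _ hα'G
    rwa [show 0 + mβ + 0 + n = mβ + n from by omega] at h3
  have hz2G : T * β * T * (d (ι (a' 0)) * Pn) ∈ G (mβ + n + 1) := by
    have h3 := hGmul _ (n + 1) _ (hGmul _ 0 _ (hGmul 0 mβ T hT0 β hβ) T hT0) _ hdα'G
    rwa [show 0 + mβ + 0 + (n + 1) = mβ + n + 1 from by omega] at h3
  have hp := aux_push ι d G V hV hι0 hleib n a' (a 0) ha' (ha 0)
  rw [← hPndef] at hp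
  have hrel0 : (d (ι (a' 0)) * Pn) * (ι (a 0) * Pm)
      = ((-1 : ℤ) ^ (n + 1)) • (ι (a' 0) * (Pn * (d (ι (a 0)) * Pm))) := by
    calc (d (ι (a' 0)) * Pn) * (ι (a 0) * Pm)
        = ((d (ι (a' 0)) * Pn) * ι (a 0)) * Pm := by simp only [mul_assoc]
      _ = (((-1 : ℤ) ^ (n + 1)) • (ι (a' 0) * (Pn * d (ι (a 0))))) * Pm := by rw [hp]
      _ = ((-1 : ℤ) ^ (n + 1)) • (ι (a' 0) * (Pn * (d (ι (a 0)) * Pm))) := by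
          rw [smul_mul_assoc]; simp [mul_assoc]
  have hrel : ι (a' 0) * (Pn * (d (ι (a 0)) * Pm))
      = ((-1 : ℤ) ^ (n + 1)) • (d (ι (a' 0)) * (Pn * (ι (a 0) * Pm))) := by
    have h2 := congrArg (fun x => ((-1 : ℤ) ^ (n + 1)) • x) hrel0
    simp only [smul_smul, ← pow_add] at h2
    rw [show (n + 1) + (n + 1) = 2 * (n + 1) from by ring, pow_mul] at h2
    simp only [neg_one_sq, one_pow, one_smul] at h2
    rw [← h2]; simp only [mul_assoc]
  have hcoef : ((-1 : ℤ)) ^ (m + mβ)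
      = -((((-1 : ℤ) ^ ((m + 1) * (mβ + n))) * ((-1 : ℤ) ^ (n + 1)))
          * ((-1 : ℤ) ^ ((mβ + n + 1) * m))) := by
    have h2K : ((-1 : ℤ)) ^ (2 * (m * mβ + m * n + n)) = 1 := by
      rw [pow_mul, neg_one_sq, one_pow]
    rw [← pow_add, ← pow_add,
      show (m + 1) * (mβ + n) + (n + 1) + (mβ + n + 1) * m
        = (m + mβ) + 1 + 2 * (m * mβ + m * n + n) from by ring,
      pow_add, pow_add, h2K, mul_one, pow_succ]
    ring
  have h1 : (d (ι (a 0)) * Pm) * (T * β * T * (ι (a' 0) * Pn))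
        - ((-1 : ℤ) ^ ((m + 1) * (mβ + n))) •
          ((T * β * T * (ι (a' 0) * Pn)) * (d (ι (a 0)) * Pm))
      ∈ Submodule.span k {c : Ω | ∃ (p q : ℕ) (y z : Ω),
          y ∈ G p ∧ z ∈ G q ∧ c = y * z - ((-1 : ℤ) ^ (p * q)) • (z * y)} :=
    Submodule.subset_span ⟨m + 1, mβ + n, _, _, hdαG, hz1G, rfl⟩
  have h2 : (T * β * T * (d (ι (a' 0)) * Pn)) * (ι (a 0) * Pm)
        - ((-1 : ℤ) ^ ((mβ + n + 1) * m)) •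
          ((ι (a 0) * Pm) * (T * β * T * (d (ι (a' 0)) * Pn)))
      ∈ Submodule.span k {c : Ω | ∃ (p q : ℕ) (y z : Ω),
          y ∈ G p ∧ z ∈ G q ∧ c = y * z - ((-1 : ℤ) ^ (p * q)) • (z * y)} :=
    Submodule.subset_span ⟨mβ + n + 1, m, _, _, hz2G, hαG, rfl⟩
  have hmem := add_mem h1
    (zsmul_mem h2 (((-1 : ℤ) ^ ((m + 1) * (mβ + n))) * ((-1 : ℤ) ^ (n + 1))))
  rw [hd1, hd2]
  convert hmem using 1
  rw [hcoef]
  simp only [mul_assoc]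
  rw [hrel]
  simp only [mul_smul_comm, smul_smul, smul_sub]
  module
end

section
/- Let A be a unital algebra over a commutative ℚ-algebra k with k → A split, and define the Tsygan map E : Ω̄ⁿA → completed DR_t A by E(a₀ da₁⋯da_n) = Σ_{k₀,…,k_n ≥ 0} 1/(k₀+⋯+k_n+n)! · (a₀ t^{k₀} da₁ t^{k₁} ⋯ da_n t^{k_n})_♮. Let c_t : completed DR_t → DR[[t]] be the map making t central. Then for every f ∈ Ω̄ⁿA one has c_t(E(f)) = (1/n!) · exp(t) · f_♮ in DR A[[t]]. -/
lemma aux_prodCX {R : Type} [Ring R] : ∀ (l : List (R × ℕ)),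
    (l.map fun p => Polynomial.C p.1 * Polynomial.X ^ p.2).prod
      = Polynomial.C (l.map Prod.fst).prod * Polynomial.X ^ (l.map Prod.snd).sum := by
  intro l
  induction l with
  | nil => simp
  | cons b l ih =>
    simp only [List.map_cons, List.prod_cons, List.sum_cons, ih]
    rw [mul_assoc (Polynomial.C b.1), ← mul_assoc (Polynomial.X ^ b.2),
      Polynomial.X_pow_mul, mul_assoc, ← pow_add, ← mul_assoc, ← map_mul]

lemma aux_card (n kk : ℕ) :
    (Finset.Nat.antidiagonalTuple (n+1) kk).card = (n + kk).choose kk := by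
  rw [← Finset.piAntidiag_univ_fin_eq_antidiagonalTuple, ← Finset.map_sym_eq_piAntidiag,
    Finset.card_map, Finset.sym_univ, Finset.card_univ, Sym.card_sym_eq_choose,
    Fintype.card_fin]
  congr 1
  omega

/-- for the Tsygan map
`E(a₀ da₁⋯da_n) = Σ_{k₀,…,k_n ≥ 0} (k₀+⋯+k_n+n)!⁻¹ (a₀ t^{k₀} da₁ t^{k₁} ⋯ da_n t^{k_n})_♮`
on the completed extended de Rham complex, and the map `c_t` making `t` central,
one has `c_t(E(f)) = (1/n!)·exp(t)·f_♮` in `DR A[[t]]`: coefficientwise in `t`-degree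
`kk`, the sum over compositions `(k₀,…,k_n)` of `kk` of `(kk+n)!⁻¹` times the word,
after making `t` central (via `ct : Ω_t → (Ω A)[X]`) and extracting the `t^kk`
coefficient, equals `(kk!·n!)⁻¹ · a₀ da₁⋯da_n` modulo commutators (i.e. in `DR A`).
Both `Ω A` (with `ι₀, d₀, G₀`) and `Ω_t A` (with `ιt, T, dt`) are axiomatized. -/
theorem stmt_19 {k A Ω₀ Ωt : Type} [CommRing k] [Algebra ℚ k]
    [Ring A] [Algebra k A] [Ring Ω₀] [Algebra k Ω₀] [Ring Ωt] [Algebra k Ωt]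
    -- the plain noncommutative forms Ω A
    (ι₀ : A →ₐ[k] Ω₀) (d₀ : Ω₀ →ₗ[k] Ω₀) (G₀ : ℕ → Submodule k Ω₀)
    (hsplit : ∃ p : A →ₗ[k] k, ∀ c : k, p (algebraMap k A c) = c)
    (hG0 : G₀ 0 = LinearMap.range ι₀.toLinearMap)
    (hGmul : ∀ m n : ℕ, ∀ x ∈ G₀ m, ∀ y ∈ G₀ n, x * y ∈ G₀ (m + n))
    (hdG : ∀ n : ℕ, ∀ x ∈ G₀ n, d₀ x ∈ G₀ (n + 1))
    (hdd : ∀ x : Ω₀, d₀ (d₀ x) = 0)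
    (hleib : ∀ (m : ℕ) (x : Ω₀), x ∈ G₀ m → ∀ y : Ω₀,
      d₀ (x * y) = d₀ x * y + ((-1 : ℤ) ^ m) • (x * d₀ y))
    (hspan : ∀ n : ℕ, G₀ n = Submodule.span k
      {w : Ω₀ | ∃ a : ℕ → A,
        w = ι₀ (a 0) * (List.ofFn fun i : Fin n => d₀ (ι₀ (a (i.1 + 1)))).prod})
    (hsup : (⨆ n, G₀ n) = ⊤)
    -- the extended forms Ω_t A
    (ιt : A →ₐ[k] Ωt) (T : Ωt) (dt : Ωt →ₗ[k] Ωt)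
    (hddt : ∀ x : Ωt, dt (dt x) = 0)
    (hdT : dt T = 0)
    (htop : Submodule.span k {w : Ωt | ∃ L : List Ωt,
        (∀ z ∈ L, z = T ∨ (∃ a : A, z = ιt a) ∨ ∃ a : A, z = dt (ιt a)) ∧
        w = L.prod} = ⊤)
    -- c_t : Ω_t → Ω A[t], the algebra map making t central
    (ct : Ωt →ₐ[k] Polynomial Ω₀)
    (hctι : ∀ a : A, ct (ιt a) = Polynomial.C (ι₀ a))
    (hctT : ct T = Polynomial.X)
    (hctd : ∀ a : A, ct (dt (ιt a)) = Polynomial.C (d₀ (ι₀ a))) :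
    ∀ (n kk : ℕ) (a : ℕ → A),
      Polynomial.coeff
          (ct (∑ c ∈ Finset.Nat.antidiagonalTuple (n + 1) kk,
            (algebraMap ℚ k (((kk + n).factorial : ℚ)⁻¹)) •
              (ιt (a 0) * T ^ (c 0) *
                (List.ofFn fun i : Fin n =>
                  dt (ιt (a (i.1 + 1))) * T ^ (c i.succ)).prod))) kk
        - (algebraMap ℚ k ((((kk.factorial : ℚ)) * (n.factorial : ℚ))⁻¹)) •
            (ι₀ (a 0) * (List.ofFn fun i : Fin n => d₀ (ι₀ (a (i.1 + 1)))).prod)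
        ∈ Submodule.span k {c : Ω₀ | ∃ (p q : ℕ) (y z : Ω₀),
            y ∈ G₀ p ∧ z ∈ G₀ q ∧ c = y * z - ((-1 : ℤ) ^ (p * q)) • (z * y)} := by

  intro n kk a
  set w : Ω₀ := ι₀ (a 0) * (List.ofFn fun i : Fin n => d₀ (ι₀ (a (i.1 + 1)))).prod with hw
  have hword : ∀ c ∈ Finset.Nat.antidiagonalTuple (n + 1) kk,
      ct (ιt (a 0) * T ^ (c 0) *
        (List.ofFn fun i : Fin n => dt (ιt (a (i.1 + 1))) * T ^ (c i.succ)).prod)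
      = Polynomial.C w * Polynomial.X ^ kk := by
    intro c hc
    rw [Finset.Nat.mem_antidiagonalTuple] at hc
    rw [map_mul, map_mul, map_pow, hctι, hctT, map_list_prod, List.map_ofFn]
    have h1 : (List.ofFn (⇑ct ∘ fun i : Fin n => dt (ιt (a (i.1 + 1))) * T ^ (c i.succ)))
        = List.map (fun p : Ω₀ × ℕ => Polynomial.C p.1 * Polynomial.X ^ p.2)
          (List.ofFn fun i : Fin n => (d₀ (ι₀ (a (i.1 + 1))), c i.succ)) := by
      rw [List.map_ofFn]
      congr 1
      funext i
      simp [map_mul, map_pow, hctd, hctT]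
    rw [h1, aux_prodCX, mul_assoc, ← mul_assoc (Polynomial.X ^ (c 0)),
      Polynomial.X_pow_mul, mul_assoc, ← pow_add, ← mul_assoc, ← map_mul]
    congr 2
    · rw [hw]
      congr 1
      rw [List.map_ofFn]
      rfl
    · rw [List.map_ofFn]
      have : (Prod.snd ∘ fun i : Fin n => (d₀ (ι₀ (a (i.1 + 1))), c i.succ))
          = fun i : Fin n => c i.succ := rfl
      rw [this, List.sum_ofFn, ← hc, Fin.sum_univ_succ]
  have hmain : Polynomial.coeff
        (ct (∑ c ∈ Finset.Nat.antidiagonalTuple (n + 1) kk,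
          (algebraMap ℚ k (((kk + n).factorial : ℚ)⁻¹)) •
            (ιt (a 0) * T ^ (c 0) *
              (List.ofFn fun i : Fin n =>
                dt (ιt (a (i.1 + 1))) * T ^ (c i.succ)).prod))) kk
      = (algebraMap ℚ k ((((kk.factorial : ℚ)) * (n.factorial : ℚ))⁻¹)) • w := by
    rw [map_sum]
    rw [Finset.sum_congr rfl (fun c hc => by rw [map_smul, hword c hc])]
    rw [Finset.sum_const, aux_card]
    rw [Polynomial.coeff_smul, Polynomial.coeff_smul, Polynomial.coeff_C_mul,
      Polynomial.coeff_X_pow, if_pos rfl, mul_one]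
    rw [← Nat.cast_smul_eq_nsmul k, smul_smul, ← map_natCast (algebraMap ℚ k), ← map_mul]
    have h1 : (kk.factorial : ℚ) ≠ 0 := Nat.cast_ne_zero.mpr (Nat.factorial_ne_zero _)
    have h2 : (n.factorial : ℚ) ≠ 0 := Nat.cast_ne_zero.mpr (Nat.factorial_ne_zero _)
    have h3 : ((kk + n).factorial : ℚ) ≠ 0 := Nat.cast_ne_zero.mpr (Nat.factorial_ne_zero _)
    have key : ((n + kk).choose kk) * kk.factorial * n.factorial = (kk + n).factorial := by
      have := Nat.choose_mul_factorial_mul_factorial (show kk ≤ n + kk by omega)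
      simpa [Nat.add_sub_cancel, Nat.add_comm] using this
    have keyQ : (((n + kk).choose kk : ℚ)) * kk.factorial * n.factorial
        = (kk + n).factorial := by
      exact_mod_cast congrArg (Nat.cast : ℕ → ℚ) key
    have hq : ((n + kk).choose kk : ℚ) * ((kk + n).factorial : ℚ)⁻¹
        = ((kk.factorial : ℚ) * (n.factorial : ℚ))⁻¹ := by
      field_simp
      linear_combination keyQ
    rw [hq]
  rw [hmain, sub_self]
  exact Submodule.zero_mem _
end
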